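/- arXiv:2003.02292 — 10 statements merged into one kernel-verified Lean document; each statement's English description precedes it below -/
import Mathlib

section
/- Let a and b be polynomials with real coefficients with deg a > deg b, and let f(s,h) = a(s) + b(s)·exp(−h·s). Let σ₀ be any real number strictly smaller than the minimum of the real parts of the complex roots of the polynomial a + b (assumed nonzero). Then there exists h₀ > 0 such that for every h with 0 < h < h₀: the set of zeros of s ↦ f(s,h) in the open half-plane Re(s) > σ₀ is finite and, counted with multiplicity (the analytic order of vanishing), the number of these zeros equals the number of roots of a + b counted with multiplicity, i.e. equals deg(a + b); moreover every zero of s ↦ f(s,h) not lying in this set satisfies Re(s) < σ₀. -/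
open Polynomial Complex
open Metric

/-- The retarded quasi-polynomial `f(s,h) = a(s) + b(s)·exp(−h·s)`. -/
noncomputable def qpoly (a b : Polynomial ℝ) (s : ℂ) (h : ℝ) : ℂ :=
  aeval s a + aeval s b * Complex.exp (-(h : ℂ) * s)

/-- Peel off a zero of finite order from an entire function. -/
lemma peel_zero (F : ℂ → ℂ) (hF : ∀ z, AnalyticAt ℂ F z) (z₀ : ℂ) (m : ℕ)
    (hord : analyticOrderAt F z₀ = (m : ℕ∞)) :
    ∃ G : ℂ → ℂ, (∀ z, AnalyticAt ℂ G z) ∧ G z₀ ≠ 0 ∧ ∀ z, F z = (z - z₀) ^ m * G z := by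
  obtain ⟨g, hg_an, hg_ne, hfg⟩ := ((hF z₀).analyticOrderAt_eq_natCast).mp hord
  classical
  set G : ℂ → ℂ := Function.update (fun z => F z / (z - z₀) ^ m) z₀ (g z₀) with hG
  have hGg : G =ᶠ[nhds z₀] g := by
    filter_upwards [hfg] with z hz
    by_cases h : z = z₀
    · subst h; simp [hG]
    · have hne : (z - z₀) ^ m ≠ 0 := pow_ne_zero _ (sub_ne_zero.mpr h)
      simp only [hG, Function.update_of_ne h]
      rw [hz, smul_eq_mul]
      field_simp
  have hGz₀ : AnalyticAt ℂ G z₀ := hg_an.congr hGg.symm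
  have hGother : ∀ z, z ≠ z₀ → AnalyticAt ℂ G z := by
    intro z hz
    have h1 : AnalyticAt ℂ (fun w => F w / (w - z₀) ^ m) z := by
      exact (hF z).div (((analyticAt_id.sub analyticAt_const).pow m))
        (pow_ne_zero _ (sub_ne_zero.mpr hz))
    apply h1.congr
    have : {w : ℂ | w ≠ z₀} ∈ nhds z := isOpen_ne.mem_nhds hz
    filter_upwards [this] with w hw
    simp [hG, Function.update_of_ne hw]
  have hGent : ∀ z, AnalyticAt ℂ G z := by
    intro z
    by_cases h : z = z₀
    · subst h; exact hGz₀
    · exact hGother z h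
  refine ⟨G, hGent, ?_, ?_⟩
  · have : G z₀ = g z₀ := by simp [hG]
    rw [this]; exact hg_ne
  · intro z
    by_cases h : z = z₀
    · subst h
      have h1 : F z = (z - z) ^ m • g z := hfg.self_of_nhds
      have h2 : G z = g z := by simp [hG]
      rw [h1, h2, smul_eq_mul]
    · have hne : (z - z₀) ^ m ≠ 0 := pow_ne_zero _ (sub_ne_zero.mpr h)
      simp only [hG, Function.update_of_ne h]
      field_simp

lemma order_ne_top (F : ℂ → ℂ) (hF : ∀ z, AnalyticAt ℂ F z) (w : ℂ) (hw : F w ≠ 0) (z : ℂ) :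
    analyticOrderAt F z ≠ ⊤ := by
  intro h
  have h1 : ∀ᶠ u in nhds z, F u = 0 := (analyticOrderAt_eq_top).mp h
  have h2 : ∃ᶠ u in nhdsWithin z {z}ᶜ, F u = 0 := (h1.filter_mono nhdsWithin_le_nhds).frequently
  have h3 : Set.EqOn F 0 Set.univ :=
    AnalyticOnNhd.eqOn_zero_of_preconnected_of_frequently_eq_zero
      (fun u _ => hF u) isPreconnected_univ (Set.mem_univ z) h2
  exact hw (h3 (Set.mem_univ w))

lemma order_transfer (F G : ℂ → ℂ) (hFe : ∀ z, AnalyticAt ℂ F z) (hGe : ∀ z, AnalyticAt ℂ G z)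
    (z₀ z₁ : ℂ) (hne : z₁ ≠ z₀) (m : ℕ) (hFG : ∀ z, F z = (z - z₀) ^ m * G z)
    (n : ℕ) (hG : analyticOrderAt G z₁ = (n : ℕ∞)) : analyticOrderAt F z₁ = (n : ℕ∞) := by
  obtain ⟨g, hg_an, hg_ne, hfg⟩ := ((hGe z₁).analyticOrderAt_eq_natCast).mp hG
  refine ((hFe z₁).analyticOrderAt_eq_natCast).mpr ⟨fun z => (z - z₀) ^ m * g z, ?_, ?_, ?_⟩
  · exact ((analyticAt_id.sub analyticAt_const).pow m).mul hg_an
  · exact mul_ne_zero (pow_ne_zero _ (sub_ne_zero.mpr hne)) hg_ne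
  · filter_upwards [hfg] with z hz
    rw [hFG z, hz, smul_eq_mul, smul_eq_mul]; ring

section
variable (F : ℂ → ℂ)

lemma entire_deriv (hF : ∀ z, AnalyticAt ℂ F z) (z : ℂ) : AnalyticAt ℂ (deriv F) z :=
  (AnalyticOnNhd.deriv (fun u _ => hF u)) z (Set.mem_univ z)

lemma logDeriv_analyticAt (hF : ∀ z, AnalyticAt ℂ F z) (z : ℂ) (hz : F z ≠ 0) :
    AnalyticAt ℂ (fun u => deriv F u / F u) z :=
  (entire_deriv F hF z).div (hF z) hz

lemma cauchy_zero (hF : ∀ z, AnalyticAt ℂ F z) (c : ℂ) (r : ℝ) (hr : 0 < r)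
    (hne : ∀ z ∈ closedBall c r, F z ≠ 0) :
    (∮ z in C(c, r), deriv F z / F z) = 0 := by
  apply circleIntegral_eq_zero_of_differentiable_on_off_countable hr.le
    (Set.countable_empty)
  · intro z hz
    exact ((logDeriv_analyticAt F hF z (hne z hz)).continuousAt).continuousWithinAt
  · intro z hz
    exact (logDeriv_analyticAt F hF z (hne z (ball_subset_closedBall hz.1))).differentiableAt
end

theorem myCircleIntegral_add {f g : ℂ → ℂ} {c : ℂ} {R : ℝ} (hf : CircleIntegrable f c R)
    (hg : CircleIntegrable g c R) :
    (∮ z in C(c, R), (f z + g z)) = (∮ z in C(c, R), f z) + ∮ z in C(c, R), g z := by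
  simp only [circleIntegral, smul_add, intervalIntegral.integral_add hf.out hg.out]

lemma arg_principle : ∀ (n : ℕ) (F : ℂ → ℂ) (hF : ∀ z, AnalyticAt ℂ F z) (c : ℂ) (r : ℝ),
    0 < r → ∀ Z : Finset ℂ, Z.card = n →
    (∀ z, z ∈ Z ↔ (z ∈ ball c r ∧ F z = 0)) →
    (∀ z ∈ sphere c r, F z ≠ 0) →
    (∮ z in C(c, r), deriv F z / F z) =
      (2 * Real.pi * I) * ∑ z ∈ Z, ((analyticOrderAt F z).toNat : ℂ) := by
  intro n
  induction n with
  | zero =>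
    intro F hF c r hr Z hcard hZ hsph
    have hZe : Z = ∅ := Finset.card_eq_zero.mp hcard
    subst hZe
    rw [Finset.sum_empty, mul_zero]
    apply cauchy_zero F hF c r hr
    intro z hz
    rw [← ball_union_sphere] at hz
    rcases hz with hz | hz
    · intro h0
      exact absurd ((hZ z).mpr ⟨hz, h0⟩) (Finset.notMem_empty z)
    · exact hsph z hz
  | succ n ih =>
    intro F hF c r hr Z hcard hZ hsph
    -- a point on the sphere where F ≠ 0
    have hwmem : (c + r : ℂ) ∈ sphere c r := by
      simp [Complex.dist_eq, abs_of_pos hr]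
    have hwne : F (c + r) ≠ 0 := hsph _ hwmem
    -- pick a zero z₀ ∈ Z
    obtain ⟨z₀, hz₀Z⟩ : ∃ z₀, z₀ ∈ Z := Finset.card_pos.mp (by omega) |>.exists_mem
    have hz₀ball : z₀ ∈ ball c r := ((hZ z₀).mp hz₀Z).1
    have hz₀sph : z₀ ∉ sphere c r := by
      intro h
      rw [mem_ball] at hz₀ball; rw [mem_sphere] at h
      exact absurd h (ne_of_lt hz₀ball)
    set m : ℕ := (analyticOrderAt F z₀).toNat with hm
    have hordm : analyticOrderAt F z₀ = (m : ℕ∞) :=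
      (ENat.coe_toNat (order_ne_top F hF _ hwne z₀)).symm
    obtain ⟨G, hGe, hGz₀, hFG⟩ := peel_zero F hF z₀ m hordm
    have hGw : G (c + r) ≠ 0 := by
      intro h
      apply hwne
      rw [hFG, h, mul_zero]
    set Z' : Finset ℂ := Z.erase z₀ with hZ'
    have hcard' : Z'.card = n := by
      rw [hZ', Finset.card_erase_of_mem hz₀Z, hcard]; omega
    have hZ'spec : ∀ z, z ∈ Z' ↔ (z ∈ ball c r ∧ G z = 0) := by
      intro z
      by_cases hzz : z = z₀
      · subst hzz
        simp only [hZ', Finset.mem_erase, ne_eq, not_true_eq_false, false_and, false_iff]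
        rintro ⟨-, h⟩; exact hGz₀ h
      · rw [hZ', Finset.mem_erase, hZ z]
        constructor
        · rintro ⟨-, hb, hf⟩
          refine ⟨hb, ?_⟩
          have := hFG z
          rw [hf] at this
          rcases mul_eq_zero.mp this.symm with h | h
          · exact absurd h (pow_ne_zero _ (sub_ne_zero.mpr hzz))
          · exact h
        · rintro ⟨hb, hg⟩
          exact ⟨hzz, hb, by rw [hFG z, hg, mul_zero]⟩
    have hG_sph : ∀ z ∈ sphere c r, G z ≠ 0 := by
      intro z hz h0
      exact hsph z hz (by rw [hFG z, h0, mul_zero])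
    have hIH := ih G hGe c r hr Z' hcard' hZ'spec hG_sph
    -- pointwise identity on sphere
    have hpt : ∀ z ∈ sphere c r, deriv F z / F z = (m : ℂ) * (z - z₀)⁻¹ + deriv G z / G z := by
      intro z hz
      have hz0 : z - z₀ ≠ 0 := by
        intro h
        exact hz₀sph (by rw [← sub_eq_zero.mp h]; exact hz)
      have hGz : G z ≠ 0 := hG_sph z hz
      have hFz : F z ≠ 0 := hsph z hz
      have hd1 : HasDerivAt (fun u : ℂ => (u - z₀) ^ m) ((m : ℂ) * (z - z₀) ^ (m - 1) * 1) z :=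
        (((hasDerivAt_id z).sub_const z₀).pow m)
      have hd2 : HasDerivAt G (deriv G z) z := (hGe z).differentiableAt.hasDerivAt
      have hFfun : F = fun u => (u - z₀) ^ m * G u := funext hFG
      have hdF : deriv F z = (m : ℂ) * (z - z₀) ^ (m - 1) * 1 * G z
          + (z - z₀) ^ m * deriv G z := by
        rw [hFfun]
        exact (hd1.mul hd2).deriv
      rw [hdF, hFG z]
      rcases Nat.eq_zero_or_pos m with hm0 | hm1
      · simp [hm0]
      · have hpow : (z - z₀) ^ (m - 1) * (z - z₀) = (z - z₀) ^ m := by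
          rw [← pow_succ]; congr 1; omega
        field_simp
        rw [← hpow]
        ring
    -- integrability
    have hint1 : CircleIntegrable (fun z => (m : ℂ) * (z - z₀)⁻¹) c r := by
      apply ContinuousOn.circleIntegrable hr.le
      apply ContinuousOn.mul continuousOn_const
      apply ContinuousOn.inv₀ ((continuousOn_id.sub continuousOn_const))
      intro z hz h
      have h' : z - z₀ = 0 := h
      exact hz₀sph (by rw [← sub_eq_zero.mp h']; exact hz)
    have hint2 : CircleIntegrable (fun z => deriv G z / G z) c r := by
      apply ContinuousOn.circleIntegrable hr.le
      intro z hz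
      exact ((logDeriv_analyticAt G hGe z (hG_sph z hz)).continuousAt).continuousWithinAt
    calc (∮ z in C(c, r), deriv F z / F z)
        = ∮ z in C(c, r), ((m : ℂ) * (z - z₀)⁻¹ + deriv G z / G z) :=
          circleIntegral.integral_congr hr.le (fun z hz => hpt z hz)
      _ = (∮ z in C(c, r), (m : ℂ) * (z - z₀)⁻¹) + ∮ z in C(c, r), deriv G z / G z :=
          myCircleIntegral_add hint1 hint2
      _ = (m : ℂ) * (2 * Real.pi * I) + (2 * Real.pi * I) * ∑ z ∈ Z', ((analyticOrderAt G z).toNat : ℂ) := by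
          rw [hIH, circleIntegral.integral_const_mul,
            circleIntegral.integral_sub_inv_of_mem_ball hz₀ball]
      _ = (2 * Real.pi * I) * ∑ z ∈ Z, ((analyticOrderAt F z).toNat : ℂ) := by
          have hsum : ∑ z ∈ Z', ((analyticOrderAt G z).toNat : ℂ)
              = ∑ z ∈ Z', ((analyticOrderAt F z).toNat : ℂ) := by
            apply Finset.sum_congr rfl
            intro z hzZ'
            have hzne : z ≠ z₀ := (Finset.mem_erase.mp hzZ').1
            have hGord : analyticOrderAt G z = ((analyticOrderAt G z).toNat : ℕ∞) :=
              (ENat.coe_toNat (order_ne_top G hGe _ hGw z)).symm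
            rw [order_transfer F G hF hGe z₀ z hzne m hFG _ hGord]
            simp
          rw [hsum, ← Finset.add_sum_erase Z _ hz₀Z]
          push_cast
          ring

lemma finite_zeros (F : ℂ → ℂ) (hF : ∀ z, AnalyticAt ℂ F z) (w : ℂ) (hw : F w ≠ 0)
    (K : Set ℂ) (hK : IsCompact K) : {z | z ∈ K ∧ F z = 0}.Finite := by
  have hcont : Continuous F := continuous_iff_continuousAt.mpr (fun z => (hF z).continuousAt)
  have hS : IsCompact {z | z ∈ K ∧ F z = 0} := by
    have : {z | z ∈ K ∧ F z = 0} = K ∩ F ⁻¹' {0} := by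
      ext z; simp [Set.mem_inter_iff, Set.mem_preimage]
    rw [this]
    exact hK.inter_right (isClosed_singleton.preimage hcont)
  have hnb : ∀ x : ℂ, {u : ℂ | u = x ∨ F u ≠ 0} ∈ nhds x := by
    intro x
    rcases (hF x).eventually_eq_zero_or_eventually_ne_zero with h | h
    · exfalso
      have h2 : ∃ᶠ u in nhdsWithin x {x}ᶜ, F u = 0 :=
        (h.filter_mono nhdsWithin_le_nhds).frequently
      have h3 : Set.EqOn F 0 Set.univ :=
        AnalyticOnNhd.eqOn_zero_of_preconnected_of_frequently_eq_zero
          (fun u _ => hF u) isPreconnected_univ (Set.mem_univ x) h2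
      exact hw (h3 (Set.mem_univ w))
    · rw [eventually_nhdsWithin_iff] at h
      filter_upwards [h] with u hu
      by_cases he : u = x
      · exact Or.inl he
      · exact Or.inr (hu he)
  obtain ⟨t, _, hcover⟩ := hS.elim_nhds_subcover (fun x => {u : ℂ | u = x ∨ F u ≠ 0})
    (fun x _ => hnb x)
  apply Set.Finite.subset t.finite_toSet
  intro z hz
  obtain ⟨x, hxt, hxz⟩ := Set.mem_iUnion₂.mp (hcover hz)
  rcases hxz with h | h
  · rwa [h]
  · exact absurd hz.2 h



lemma aeval_eq_eval_map (p : Polynomial ℝ) (s : ℂ) :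
    aeval s p = (p.map (algebraMap ℝ ℂ)).eval s := by
  rw [Polynomial.eval_map, Polynomial.aeval_def]

lemma poly_entire (P : Polynomial ℂ) (z : ℂ) : AnalyticAt ℂ (fun u => P.eval u) z := by
  have := AnalyticOnNhd.eval_polynomial (𝕜 := ℂ) (A := ℂ) P
  exact this z (Set.mem_univ z)

lemma qpoly_zero (a b : Polynomial ℝ) :
    (fun s => qpoly a b s 0) = fun s => ((a + b).map (algebraMap ℝ ℂ)).eval s := by
  funext s
  rw [← aeval_eq_eval_map]
  simp [qpoly]

lemma qpoly_hasDerivAt (a b : Polynomial ℝ) (h : ℝ) (s : ℂ) :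
    HasDerivAt (fun u => qpoly a b u h)
      (aeval s (derivative a) +
        (aeval s (derivative b) - (h : ℂ) * aeval s b) * Complex.exp (-(h : ℂ) * s)) s := by
  have hA : HasDerivAt (fun u : ℂ => aeval u a)
      ((a.map (algebraMap ℝ ℂ)).derivative.eval s) s := by
    have := Polynomial.hasDerivAt (a.map (algebraMap ℝ ℂ)) s
    apply this.congr_of_eventuallyEq
    filter_upwards with u
    rw [aeval_eq_eval_map]
  have hB : HasDerivAt (fun u : ℂ => aeval u b)
      ((b.map (algebraMap ℝ ℂ)).derivative.eval s) s := by
    have := Polynomial.hasDerivAt (b.map (algebraMap ℝ ℂ)) s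
    apply this.congr_of_eventuallyEq
    filter_upwards with u
    rw [aeval_eq_eval_map]
  have hE : HasDerivAt (fun u : ℂ => Complex.exp (-(h : ℂ) * u))
      (Complex.exp (-(h : ℂ) * s) * (-(h : ℂ))) s := by
    have h1 : HasDerivAt (fun u : ℂ => -(h : ℂ) * u) (-(h : ℂ)) s := by
      simpa using (hasDerivAt_id s).const_mul (-(h : ℂ))
    exact h1.cexp
  have := hA.add ((hB.mul hE))
  apply this.congr_deriv
  rw [Polynomial.derivative_map, Polynomial.derivative_map, ← aeval_eq_eval_map,
    ← aeval_eq_eval_map]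
  ring

lemma order_eval_eq_rootMultiplicity (P : Polynomial ℂ) (hP : P ≠ 0) (w : ℂ)
    (hPe : ∀ z, AnalyticAt ℂ (fun u => P.eval u) z) :
    analyticOrderAt (fun u => P.eval u) w = (P.rootMultiplicity w : ℕ∞) := by
  set m := P.rootMultiplicity w
  refine ((hPe w).analyticOrderAt_eq_natCast).mpr
    ⟨fun z => (P /ₘ (X - C w) ^ m).eval z, poly_entire _ w, ?_, ?_⟩
  · exact Polynomial.eval_divByMonic_pow_rootMultiplicity_ne_zero w hP
  · filter_upwards with z
    have h1 := Polynomial.pow_mul_divByMonic_rootMultiplicity_eq P w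
    calc P.eval z = ((X - C w) ^ m * (P /ₘ (X - C w) ^ m)).eval z := by rw [h1]
      _ = (z - w) ^ m • (P /ₘ (X - C w) ^ m).eval z := by
          rw [Polynomial.eval_mul, Polynomial.eval_pow, Polynomial.eval_sub,
            Polynomial.eval_X, Polynomial.eval_C, smul_eq_mul]

lemma poly_bound (p : Polynomial ℂ) (d : ℕ) (hd : p.natDegree ≤ d) :
    ∃ C : ℝ, 0 ≤ C ∧ ∀ s : ℂ, 1 ≤ ‖s‖ → ‖p.eval s‖ ≤ C * ‖s‖ ^ d := by
  refine ⟨∑ i ∈ Finset.range (d + 1), ‖p.coeff i‖,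
    Finset.sum_nonneg fun i _ => norm_nonneg _, fun s hs => ?_⟩
  rw [Polynomial.eval_eq_sum_range' (Nat.lt_succ_of_le hd)]
  calc ‖∑ i ∈ Finset.range (d + 1), p.coeff i * s ^ i‖
      ≤ ∑ i ∈ Finset.range (d + 1), ‖p.coeff i * s ^ i‖ := norm_sum_le _ _
    _ ≤ ∑ i ∈ Finset.range (d + 1), ‖p.coeff i‖ * ‖s‖ ^ d := by
        apply Finset.sum_le_sum
        intro i hi
        rw [norm_mul, norm_pow]
        exact mul_le_mul_of_nonneg_left
          (pow_le_pow_right₀ hs (Nat.lt_succ_iff.mp (Finset.mem_range.mp hi)))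
          (norm_nonneg _)
    _ = (∑ i ∈ Finset.range (d + 1), ‖p.coeff i‖) * ‖s‖ ^ d := by
        rw [Finset.sum_mul]

lemma tail_bound (A B : Polynomial ℂ) (hdeg : B.degree < A.degree) (M : ℝ) (hM : 0 ≤ M) :
    ∃ R : ℝ, 1 ≤ R ∧ ∀ s : ℂ, R ≤ ‖s‖ → M * ‖B.eval s‖ < ‖A.eval s‖ := by
  by_cases hA0 : A.degree ≤ 0
  · -- then B = 0 and A is a nonzero constant
    have hB : B = 0 := by
      rw [← Polynomial.degree_eq_bot]
      exact Nat.WithBot.lt_zero_iff.mp (lt_of_lt_of_le hdeg hA0)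
    have hAne : A ≠ 0 := Polynomial.ne_zero_of_degree_gt hdeg
    refine ⟨1, le_refl 1, fun s _ => ?_⟩
    rw [hB]
    simp only [Polynomial.eval_zero, norm_zero, mul_zero]
    rw [Polynomial.eq_C_of_degree_le_zero hA0]
    simp only [Polynomial.eval_C]
    have : A.coeff 0 ≠ 0 := by
      intro h
      apply hAne
      rw [Polynomial.eq_C_of_degree_le_zero hA0, h, map_zero]
    exact norm_pos_iff.mpr this
  · push_neg at hA0
    have hAne : A ≠ 0 := fun h => by simp [h] at hA0
    set n := A.natDegree with hn
    have hn1 : 1 ≤ n := by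
      rwa [← Polynomial.natDegree_pos_iff_degree_pos, ← hn] at hA0
    have hlc : 0 < ‖A.leadingCoeff‖ := by
      simp [Polynomial.leadingCoeff_ne_zero.mpr hAne]
    obtain ⟨CE, hCE0, hCE⟩ := poly_bound A.eraseLead (n - 1)
      (le_trans (Polynomial.eraseLead_natDegree_le A) (le_refl _))
    have hBdeg : B.natDegree ≤ n - 1 := by
      by_cases hB : B = 0
      · simp [hB]
      · have : B.natDegree < n := by
          rw [hn]
          exact Polynomial.natDegree_lt_natDegree hB hdeg
        omega
    obtain ⟨CB, hCB0, hCB⟩ := poly_bound B (n - 1) hBdeg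
    set R : ℝ := max 1 ((CE + M * CB + 1) / ‖A.leadingCoeff‖) with hR
    refine ⟨R, le_max_left _ _, fun s hs => ?_⟩
    have hs1 : 1 ≤ ‖s‖ := le_trans (le_max_left _ _) hs
    have hs0 : 0 < ‖s‖ := lt_of_lt_of_le zero_lt_one hs1
    have hpow1 : (1 : ℝ) ≤ ‖s‖ ^ (n - 1) := one_le_pow₀ hs1
    have hkey : ‖A.eval s‖ ≥ ‖A.leadingCoeff‖ * ‖s‖ ^ n - CE * ‖s‖ ^ (n - 1) := by
      have hsplit : A.eval s = A.eraseLead.eval s + A.leadingCoeff * s ^ n := by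
        have := congrArg (Polynomial.eval s) (Polynomial.eraseLead_add_C_mul_X_pow A)
        simp only [Polynomial.eval_add, Polynomial.eval_mul, Polynomial.eval_pow,
          Polynomial.eval_C, Polynomial.eval_X] at this
        exact this.symm
      rw [hsplit]
      have h1 : ‖A.leadingCoeff * s ^ n‖ - ‖A.eraseLead.eval s‖
          ≤ ‖A.eraseLead.eval s + A.leadingCoeff * s ^ n‖ := by
        have e : (A.eraseLead.eval s + A.leadingCoeff * s ^ n) + -(A.eraseLead.eval s)
            = A.leadingCoeff * s ^ n := by ring
        have h1' := norm_add_le (A.eraseLead.eval s + A.leadingCoeff * s ^ n)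
          (-(A.eraseLead.eval s))
        rw [e, norm_neg] at h1'
        linarith
      have h2 : ‖A.leadingCoeff * s ^ n‖ = ‖A.leadingCoeff‖ * ‖s‖ ^ n := by
        rw [norm_mul, norm_pow]
      linarith [hCE s hs1]
    have hpow : ‖s‖ ^ n = ‖s‖ ^ (n - 1) * ‖s‖ := by
      rw [← pow_succ]; congr 1; omega
    have hRs : CE + M * CB + 1 ≤ ‖A.leadingCoeff‖ * ‖s‖ := by
      have h3 : (CE + M * CB + 1) / ‖A.leadingCoeff‖ ≤ ‖s‖ := le_trans (le_max_right _ _) hs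
      rw [div_le_iff₀ hlc] at h3
      linarith [mul_comm ‖A.leadingCoeff‖ ‖s‖]
    calc M * ‖B.eval s‖ ≤ M * (CB * ‖s‖ ^ (n - 1)) :=
          mul_le_mul_of_nonneg_left (hCB s hs1) hM
      _ = M * CB * ‖s‖ ^ (n - 1) := by ring
      _ < (M * CB + 1) * ‖s‖ ^ (n - 1) := by nlinarith
      _ ≤ (‖A.leadingCoeff‖ * ‖s‖ - CE) * ‖s‖ ^ (n - 1) := by nlinarith
      _ = ‖A.leadingCoeff‖ * ‖s‖ ^ n - CE * ‖s‖ ^ (n - 1) := by rw [hpow]; ring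
      _ ≤ ‖A.eval s‖ := hkey

lemma exists_delta (T : Finset ℂ) (σ₀ : ℝ) (hT : ∀ w ∈ T, σ₀ < w.re) :
    ∃ δ : ℝ, 0 < δ ∧ (∀ w ∈ T, σ₀ + δ < w.re) ∧
      (∀ w ∈ T, ∀ u ∈ T, w ≠ u → 2 * δ < dist w u) := by
  classical
  set S : Finset ℝ := insert 1 ((T.image fun w => w.re - σ₀) ∪
    (((T ×ˢ T).filter (fun p => p.1 ≠ p.2)).image (fun p => dist p.1 p.2 / 3))) with hS
  have hne : S.Nonempty := ⟨1, Finset.mem_insert_self _ _⟩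
  have hpos : ∀ x ∈ S, 0 < x := by
    intro x hx
    rw [hS] at hx
    rcases Finset.mem_insert.mp hx with h | h
    · rw [h]; norm_num
    · rcases Finset.mem_union.mp h with h | h
      · obtain ⟨w, hw, rfl⟩ := Finset.mem_image.mp h
        linarith [hT w hw]
      · obtain ⟨p, hp, rfl⟩ := Finset.mem_image.mp h
        have hne' := (Finset.mem_filter.mp hp).2
        have := dist_pos.mpr hne'
        positivity
  have hminpos : 0 < S.min' hne := hpos _ (S.min'_mem hne)
  refine ⟨S.min' hne / 2, by linarith, ?_, ?_⟩
  · intro w hw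
    have h1 : S.min' hne ≤ w.re - σ₀ := Finset.min'_le _ _ (by
      rw [hS]
      exact Finset.mem_insert_of_mem (Finset.mem_union_left _ (Finset.mem_image_of_mem _ hw)))
    have h2 : 0 < w.re - σ₀ := by linarith [hT w hw]
    linarith
  · intro w hw u hu hne'
    have hmem : dist w u / 3 ∈ S := by
      rw [hS]
      refine Finset.mem_insert_of_mem (Finset.mem_union_right _ ?_)
      apply Finset.mem_image.mpr
      exact ⟨(w, u), Finset.mem_filter.mpr ⟨Finset.mem_product.mpr ⟨hw, hu⟩, hne'⟩, rfl⟩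
    have h1 : S.min' hne ≤ dist w u / 3 := Finset.min'_le _ _ hmem
    have h2 : 0 < dist w u := dist_pos.mpr hne'
    linarith

lemma exists_eps (Q : Set ℂ) (hQ : IsCompact Q) (g : ℂ → ℂ) (hg : Continuous g)
    (hne : ∀ z ∈ Q, g z ≠ 0) : ∃ ε : ℝ, 0 < ε ∧ ∀ z ∈ Q, ε ≤ ‖g z‖ := by
  rcases Q.eq_empty_or_nonempty with h | h
  · exact ⟨1, zero_lt_one, by simp [h]⟩
  · obtain ⟨z₀, hz₀Q, hmin⟩ := hQ.exists_isMinOn h (hg.norm.continuousOn)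
    exact ⟨‖g z₀‖, norm_pos_iff.mpr (hne z₀ hz₀Q), fun z hz => hmin hz⟩

lemma exp_est (h R : ℝ) (hh : 0 < h) (hR : 1 ≤ R) (hhR : h * R ≤ 1) (z : ℂ) (hz : ‖z‖ ≤ R) :
    ‖Complex.exp (-(h : ℂ) * z) - 1‖ ≤ 2 * (h * R) ∧ ‖Complex.exp (-(h : ℂ) * z)‖ ≤ 3 := by
  have habs : ‖(-(h : ℂ) * z)‖ = h * ‖z‖ := by
    rw [norm_mul]
    simp [Complex.norm_real, abs_of_pos hh]
  have hle1 : ‖(-(h : ℂ) * z)‖ ≤ 1 := by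
    rw [habs]
    calc h * ‖z‖ ≤ h * R := by nlinarith [norm_nonneg z]
      _ ≤ 1 := hhR
  constructor
  · calc ‖(Complex.exp (-(h : ℂ) * z) - 1)‖ ≤ 2 * ‖(-(h : ℂ) * z)‖ :=
          Complex.norm_exp_sub_one_le hle1
      _ = 2 * (h * ‖z‖) := by rw [habs]
      _ ≤ 2 * (h * R) := by nlinarith [norm_nonneg z]
  · rw [Complex.norm_exp]
    have h1 : (-(h : ℂ) * z).re ≤ 1 := by
      calc (-(h : ℂ) * z).re ≤ ‖(-(h : ℂ) * z)‖ := Complex.re_le_norm _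
        _ ≤ 1 := hle1
    calc Real.exp (-(h : ℂ) * z).re ≤ Real.exp 1 := Real.exp_le_exp.mpr h1
      _ ≤ 3 := by linarith [Real.exp_one_lt_d9]

lemma aeval_cont (p : Polynomial ℝ) : Continuous fun z : ℂ => (aeval z p : ℂ) := by
  have e : (fun z : ℂ => (aeval z p : ℂ)) = fun z => (p.map (algebraMap ℝ ℂ)).eval z :=
    funext fun z => aeval_eq_eval_map p z
  rw [e]
  exact continuous_iff_continuousAt.mpr fun z => (poly_entire _ z).continuousAt

set_option maxHeartbeats 2000000 in
theorem stmt0 (a b : Polynomial ℝ) (hdeg : b.degree < a.degree)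
    (hab : a + b ≠ 0) (σ₀ : ℝ)
    (hσ₀ : ∀ z : ℂ, aeval z (a + b) = 0 → σ₀ < z.re)
    (hA : ∀ (h : ℝ) (z : ℂ), AnalyticAt ℂ (fun s => qpoly a b s h) z) :
    ∃ h₀ : ℝ, 0 < h₀ ∧ ∀ h : ℝ, 0 < h → h < h₀ →
      ∃ Z : Finset ℂ,
        (∀ s : ℂ, s ∈ Z ↔ (σ₀ < s.re ∧ qpoly a b s h = 0)) ∧
        (∑ s ∈ Z, (analyticOrderAt (fun s => qpoly a b s h) s).toNat) = (a + b).natDegree ∧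
        (∀ s : ℂ, qpoly a b s h = 0 → s ∉ Z → s.re < σ₀) := by
  classical
  set P : Polynomial ℂ := (a + b).map (algebraMap ℝ ℂ) with hPdef
  have hinj : Function.Injective (algebraMap ℝ ℂ) := (algebraMap ℝ ℂ).injective
  have hP0 : P ≠ 0 := by
    intro hcontra
    apply hab
    apply Polynomial.map_injective _ hinj
    rw [Polynomial.map_zero]
    exact hcontra
  have hPeval : ∀ z : ℂ, P.eval z = aeval z (a + b) := fun z => (aeval_eq_eval_map _ z).symm
  set T : Finset ℂ := P.roots.toFinset with hTdef
  have hTmem : ∀ w : ℂ, w ∈ T ↔ P.eval w = 0 := by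
    intro w
    rw [hTdef, Multiset.mem_toFinset, Polynomial.mem_roots hP0]
    exact Iff.rfl
  have hTre : ∀ w ∈ T, σ₀ < w.re := fun w hw =>
    hσ₀ w (by rw [← hPeval]; exact (hTmem w).mp hw)
  obtain ⟨δ, hδ0, hδre, hδsep⟩ := exists_delta T σ₀ hTre
  have hsumT : ∑ w ∈ T, P.rootMultiplicity w = (a + b).natDegree := by
    have h1 : ∑ w ∈ T, P.roots.count w = Multiset.card P.roots :=
      Multiset.toFinset_sum_count_eq _
    have h2 : Multiset.card P.roots = P.natDegree :=
      Polynomial.splits_iff_card_roots.mp (IsAlgClosed.splits P)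
    have h3 : P.natDegree = (a + b).natDegree := Polynomial.natDegree_map_eq_of_injective hinj _
    rw [← h3, ← h2, ← h1]
    apply Finset.sum_congr rfl
    intro w _
    rw [Polynomial.count_roots]
  set M : ℝ := Real.exp (max 0 (-σ₀)) with hMdef
  have hM0 : 0 < M := Real.exp_pos _
  have hdegm : (b.map (algebraMap ℝ ℂ)).degree < (a.map (algebraMap ℝ ℂ)).degree := by
    rw [Polynomial.degree_map_eq_of_injective hinj, Polynomial.degree_map_eq_of_injective hinj]
    exact hdeg
  obtain ⟨R₀, hR₀1, hR₀⟩ := tail_bound _ _ hdegm M hM0.le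
  set R : ℝ := (insert R₀ (T.image fun w => ‖w‖ + δ)).max' ⟨R₀, Finset.mem_insert_self _ _⟩
    with hRdef
  have hRR₀ : R₀ ≤ R := Finset.le_max' _ _ (Finset.mem_insert_self _ _)
  have hR1 : 1 ≤ R := le_trans hR₀1 hRR₀
  have hR0 : (0:ℝ) < R := lt_of_lt_of_le zero_lt_one hR1
  have hRw : ∀ w ∈ T, ‖w‖ + δ ≤ R := by
    intro w hw
    exact Finset.le_max' _ (‖w‖ + δ)
      (Finset.mem_insert_of_mem (Finset.mem_image_of_mem (fun w => ‖w‖ + δ) hw))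
  set Q : Set ℂ := (closedBall (0:ℂ) R ∩ {z : ℂ | σ₀ ≤ z.re}) \ (⋃ w ∈ (T : Set ℂ), ball w δ)
    with hQdef
  have hQc : IsCompact Q := by
    apply IsCompact.diff
    · exact (isCompact_closedBall 0 R).inter_right
        (isClosed_le continuous_const Complex.continuous_re)
    · exact isOpen_biUnion fun w _ => isOpen_ball
  have hQP : ∀ z ∈ Q, P.eval z ≠ 0 := by
    intro z hz hze
    apply hz.2
    exact Set.mem_biUnion (Finset.mem_coe.mpr ((hTmem z).mpr hze)) (mem_ball_self hδ0)
  have hPcont : Continuous fun z : ℂ => P.eval z :=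
    continuous_iff_continuousAt.mpr fun z => (poly_entire P z).continuousAt
  obtain ⟨ε, hε0, hε⟩ := exists_eps Q hQc _ hPcont hQP
  have hball_sub : ∀ w ∈ T, ∀ z ∈ closedBall w δ, ‖z‖ ≤ R := by
    intro w hw z hz
    have h2 : dist z w ≤ δ := mem_closedBall.mp hz
    calc ‖z‖ = dist z 0 := (dist_zero_right z).symm
      _ ≤ dist z w + dist w 0 := dist_triangle _ _ _
      _ = dist z w + ‖w‖ := by rw [dist_zero_right]
      _ ≤ δ + ‖w‖ := by linarith
      _ ≤ R := by linarith [hRw w hw]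
  have hball_re : ∀ w ∈ T, ∀ z ∈ closedBall w δ, σ₀ < z.re := by
    intro w hw z hz
    have h1 : |(z - w).re| ≤ ‖(z - w)‖ := Complex.abs_re_le_norm _
    have h2 : ‖(z - w)‖ ≤ δ := by
      rw [← Complex.dist_eq]; exact mem_closedBall.mp hz
    have h3 := hδre w hw
    have h4 : |z.re - w.re| ≤ δ := by
      simpa [Complex.sub_re] using le_trans h1 h2
    have h5 := abs_le.mp h4
    have := h5.1
    linarith
  have hsphQ : ∀ w ∈ T, ∀ z ∈ sphere w δ, z ∈ Q := by
    intro w hw z hz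
    have hzc : z ∈ closedBall w δ := sphere_subset_closedBall hz
    refine ⟨⟨?_, ?_⟩, ?_⟩
    · rw [mem_closedBall, dist_zero_right]; exact hball_sub w hw z hzc
    · exact le_of_lt (hball_re w hw z hzc)
    · intro hmem
      obtain ⟨u, huT, hzu⟩ := Set.mem_iUnion₂.mp hmem
      have huT' : u ∈ T := Finset.mem_coe.mp huT
      rw [mem_sphere] at hz
      rw [mem_ball] at hzu
      by_cases huw : u = w
      · subst huw; linarith
      · have hsep := hδsep u huT' w hw huw
        have h4 : dist u w ≤ dist z u + dist z w := dist_triangle_left _ _ _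
        linarith
  obtain ⟨CB, hCB⟩ := (isCompact_closedBall (0:ℂ) R).exists_bound_of_continuousOn
    (aeval_cont b).continuousOn
  obtain ⟨CB', hCB'⟩ := (isCompact_closedBall (0:ℂ) R).exists_bound_of_continuousOn
    (aeval_cont (derivative b)).continuousOn
  obtain ⟨CP, hCP⟩ := (isCompact_closedBall (0:ℂ) R).exists_bound_of_continuousOn
    hPcont.continuousOn
  obtain ⟨CPd, hCPd⟩ := (isCompact_closedBall (0:ℂ) R).exists_bound_of_continuousOn
    (continuous_iff_continuousAt.mpr fun z =>
      (poly_entire (derivative P) z).continuousAt).continuousOn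
  have hmem0 : (0:ℂ) ∈ closedBall (0:ℂ) R := mem_closedBall_self hR0.le
  have hCB0 : 0 ≤ CB := le_trans (norm_nonneg _) (hCB 0 hmem0)
  have hCB'0 : 0 ≤ CB' := le_trans (norm_nonneg _) (hCB' 0 hmem0)
  have hCP0 : 0 ≤ CP := le_trans (norm_nonneg _) (hCP 0 hmem0)
  have hCPd0 : 0 ≤ CPd := le_trans (norm_nonneg _) (hCPd 0 hmem0)
  set C₁ : ℝ := 2*R*CB' + 3*CB with hC₁def
  set C₂ : ℝ := C₁*CP + CPd*(2*R*CB) with hC₂def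
  have hC₁0 : 0 ≤ C₁ := by rw [hC₁def]; nlinarith
  have hC₂0 : 0 ≤ C₂ := by
    rw [hC₂def]
    nlinarith [mul_nonneg hC₁0 hCP0, mul_nonneg hCPd0 (by nlinarith : (0:ℝ) ≤ 2*R*CB)]
  have p1 : 0 < 1/R := by positivity
  have p2 : 0 < ε/(8*R*(CB+1)) := by apply div_pos hε0; nlinarith
  have p3 : 0 < ε^2/(4*δ*(C₂+1)) := by
    apply div_pos (by positivity); nlinarith
  refine ⟨min (1/R) (min (ε/(8*R*(CB+1))) (ε^2/(4*δ*(C₂+1)))), lt_min p1 (lt_min p2 p3), ?_⟩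
  intro h hh0 hhlt
  have h_lt1 : h < 1/R := lt_of_lt_of_le hhlt (min_le_left _ _)
  have h_lt2 : h < ε/(8*R*(CB+1)) :=
    lt_of_lt_of_le hhlt (le_trans (min_le_right _ _) (min_le_left _ _))
  have h_lt3 : h < ε^2/(4*δ*(C₂+1)) :=
    lt_of_lt_of_le hhlt (le_trans (min_le_right _ _) (min_le_right _ _))
  have hhR : h * R < 1 := (lt_div_iff₀ hR0).mp h_lt1
  have hh1 : h ≤ 1 := by nlinarith
  have h8 : h * (8*R*(CB+1)) < ε := (lt_div_iff₀ (by nlinarith)).mp h_lt2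
  have h4δ : h * (4*δ*(C₂+1)) < ε^2 := (lt_div_iff₀ (by nlinarith)).mp h_lt3
  set F : ℂ → ℂ := fun s => qpoly a b s h with hFdef
  have hFsub : ∀ z : ℂ, F z - P.eval z = aeval z b * (Complex.exp (-(h:ℂ)*z) - 1) := by
    intro z
    rw [hPeval z]
    simp only [hFdef, qpoly, map_add]
    ring
  have hFP : ∀ z : ℂ, ‖z‖ ≤ R → ‖F z - P.eval z‖ ≤ CB * (2*(h*R)) := by
    intro z hz
    rw [hFsub z, norm_mul]
    have h1 := (exp_est h R hh0 hR1 hhR.le z hz).1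
    have h2 : ‖(aeval z b : ℂ)‖ ≤ CB := hCB z (by rwa [mem_closedBall, dist_zero_right])
    have h3 := norm_nonneg ((aeval z b : ℂ))
    have h4 := norm_nonneg (Complex.exp (-(h:ℂ)*z) - 1)
    nlinarith
  have hFPhalf : ∀ z : ℂ, ‖z‖ ≤ R → ‖F z - P.eval z‖ < ε/2 := by
    intro z hz
    have := hFP z hz
    nlinarith
  have hQF : ∀ z ∈ Q, F z ≠ 0 := by
    intro z hz h0
    have h1 := hε z hz
    have h2 := hFPhalf z (by
      have := hz.1.1; rwa [mem_closedBall, dist_zero_right] at this)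
    rw [h0, zero_sub, norm_neg] at h2
    linarith
  have hsphF : ∀ w ∈ T, ∀ z ∈ sphere w δ, F z ≠ 0 := fun w hw z hz => hQF z (hsphQ w hw z hz)
  have hsphFlb : ∀ w ∈ T, ∀ z ∈ sphere w δ, ε/2 ≤ ‖F z‖ := by
    intro w hw z hz
    have hzQ := hsphQ w hw z hz
    have h1 := hε z hzQ
    have h2 := hFPhalf z (by
      have := hzQ.1.1; rwa [mem_closedBall, dist_zero_right] at this)
    have e : F z - (F z - P.eval z) = P.eval z := by ring
    have h3 := norm_sub_le (F z) (F z - P.eval z)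
    rw [e] at h3
    linarith
  have htail : ∀ s : ℂ, R ≤ ‖s‖ → σ₀ ≤ s.re → F s ≠ 0 := by
    intro s hsR hsre h0
    have hexp : ‖Complex.exp (-(h:ℂ)*s)‖ ≤ M := by
      rw [Complex.norm_exp, hMdef]
      apply Real.exp_le_exp.mpr
      have e1 : (-(h:ℂ)*s) = ((-h : ℝ) : ℂ) * s := by push_cast; ring
      rw [e1, Complex.re_ofReal_mul]
      rcases le_or_gt σ₀ 0 with hc | hc
      · have := le_max_right (0:ℝ) (-σ₀)
        nlinarith
      · have := le_max_left (0:ℝ) (-σ₀)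
        nlinarith
    have hAs := hR₀ s (le_trans hRR₀ hsR)
    have h1 : (aeval s a : ℂ) = -(aeval s b * Complex.exp (-(h:ℂ)*s)) := by
      have h0' : (aeval s a : ℂ) + aeval s b * Complex.exp (-(h:ℂ)*s) = 0 := h0
      linear_combination h0'
    have h2 : ‖(aeval s a : ℂ)‖ ≤ M * ‖(aeval s b : ℂ)‖ := by
      rw [h1, norm_neg, norm_mul]
      have := norm_nonneg ((aeval s b : ℂ))
      nlinarith
    rw [aeval_eq_eval_map, aeval_eq_eval_map] at h2
    linarith
  have hzero_ball : ∀ s : ℂ, F s = 0 → σ₀ ≤ s.re → ∃ w ∈ T, s ∈ ball w δ := by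
    intro s h0 hre
    by_contra hno
    push_neg at hno
    rcases le_or_gt ‖s‖ R with hc | hc
    · apply hQF s _ h0
      refine ⟨⟨by rwa [mem_closedBall, dist_zero_right], hre⟩, ?_⟩
      intro hmem
      obtain ⟨u, huT, hzu⟩ := Set.mem_iUnion₂.mp hmem
      exact hno u (Finset.mem_coe.mp huT) hzu
    · exact htail s hc.le hre h0
  -- per-root counting
  have hcount : ∀ w ∈ T, ∃ Zw : Finset ℂ,
      (∀ z, z ∈ Zw ↔ (z ∈ ball w δ ∧ F z = 0)) ∧
      (∑ z ∈ Zw, (analyticOrderAt F z).toNat = P.rootMultiplicity w) := by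
    intro w hw
    have hsph_pt : (w + (δ:ℂ)) ∈ sphere w δ := by
      simp [mem_sphere, Complex.dist_eq, Complex.norm_real, abs_of_pos hδ0]
    have hFpt : F (w + δ) ≠ 0 := hsphF w hw _ hsph_pt
    have hfin : {z : ℂ | z ∈ closedBall w δ ∧ F z = 0}.Finite :=
      finite_zeros F (hA h) _ hFpt _ (isCompact_closedBall w δ)
    have hsub : {z : ℂ | z ∈ ball w δ ∧ F z = 0} ⊆ {z : ℂ | z ∈ closedBall w δ ∧ F z = 0} :=
      fun z hz => ⟨ball_subset_closedBall hz.1, hz.2⟩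
    set Zw : Finset ℂ := (hfin.subset hsub).toFinset with hZwdef
    have hZwmem : ∀ z, z ∈ Zw ↔ (z ∈ ball w δ ∧ F z = 0) := by
      intro z; rw [hZwdef, Set.Finite.mem_toFinset]; exact Iff.rfl
    refine ⟨Zw, hZwmem, ?_⟩
    have hAPh := arg_principle Zw.card F (hA h) w δ hδ0 Zw rfl hZwmem
      (fun z hz => hsphF w hw z hz)
    have hF₀e : ∀ z, AnalyticAt ℂ (fun u : ℂ => P.eval u) z := fun z => poly_entire P z
    have hspec0 : ∀ z, z ∈ ({w} : Finset ℂ) ↔ (z ∈ ball w δ ∧ P.eval z = 0) := by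
      intro z
      rw [Finset.mem_singleton]
      constructor
      · intro hzw
        rw [hzw]
        exact ⟨mem_ball_self hδ0, (hTmem w).mp hw⟩
      · rintro ⟨hb, hz0⟩
        by_contra hne
        have hzT : z ∈ T := (hTmem z).mpr hz0
        have := hδsep z hzT w hw hne
        rw [mem_ball] at hb
        linarith
    have hAP0 := arg_principle 1 (fun u : ℂ => P.eval u) hF₀e w δ hδ0 {w}
      (Finset.card_singleton w) hspec0 (fun z hz => hQP z (hsphQ w hw z hz))
    have hordw : analyticOrderAt (fun u : ℂ => P.eval u) w = ((P.rootMultiplicity w : ℕ) : ℕ∞) :=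
      order_eval_eq_rootMultiplicity P hP0 w hF₀e
    rw [Finset.sum_singleton] at hAP0
    have htn : ((analyticOrderAt (fun u : ℂ => P.eval u) w).toNat) = P.rootMultiplicity w := by
      rw [hordw]; simp
    rw [htn] at hAP0
    -- pointwise bound on the sphere
    have hptb : ∀ z ∈ sphere w δ,
        ‖deriv F z / F z - deriv (fun u : ℂ => P.eval u) z / P.eval z‖ ≤ 1/(2*δ) := by
      intro z hz
      have hzQ := hsphQ w hw z hz
      have hzR : ‖z‖ ≤ R := by
        have := hzQ.1.1; rwa [mem_closedBall, dist_zero_right] at this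
      have hzcb : z ∈ closedBall (0:ℂ) R := by rwa [mem_closedBall, dist_zero_right]
      have hFz : F z ≠ 0 := hsphF w hw z hz
      have hPz : P.eval z ≠ 0 := hQP z hzQ
      have hPz_lb : ε ≤ ‖P.eval z‖ := hε z hzQ
      have hFz_lb : ε/2 ≤ ‖F z‖ := hsphFlb w hw z hz
      have hdF : deriv F z = aeval z (derivative a) +
          (aeval z (derivative b) - (h:ℂ) * aeval z b) * Complex.exp (-(h:ℂ)*z) :=
        (qpoly_hasDerivAt a b h z).deriv
      have hdP : deriv (fun u : ℂ => P.eval u) z = (derivative P).eval z := by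
        exact Polynomial.deriv (p := P) (x := z)
      have hPdev : (derivative P).eval z = aeval z (derivative a) + aeval z (derivative b) := by
        rw [hPdef, Polynomial.derivative_map, ← aeval_eq_eval_map]
        simp
      have hDdiff : ‖deriv F z - (derivative P).eval z‖ ≤ h * C₁ := by
        rw [hdF, hPdev]
        have e : (aeval z (derivative a) +
            (aeval z (derivative b) - (h:ℂ) * aeval z b) * Complex.exp (-(h:ℂ)*z)) -
            (aeval z (derivative a) + aeval z (derivative b))
            = aeval z (derivative b) * (Complex.exp (-(h:ℂ)*z) - 1)
              - ((h:ℂ) * aeval z b) * Complex.exp (-(h:ℂ)*z) := by ring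
        rw [e]
        have h1 := norm_sub_le (aeval z (derivative b) * (Complex.exp (-(h:ℂ)*z) - 1))
          (((h:ℂ) * aeval z b) * Complex.exp (-(h:ℂ)*z))
        rw [norm_mul, norm_mul, norm_mul] at h1
        have h2 := (exp_est h R hh0 hR1 hhR.le z hzR).1
        have h3 := (exp_est h R hh0 hR1 hhR.le z hzR).2
        have h4 : ‖(aeval z (derivative b) : ℂ)‖ ≤ CB' := hCB' z hzcb
        have h5 : ‖(aeval z b : ℂ)‖ ≤ CB := hCB z hzcb
        have h6 : ‖((h:ℂ))‖ = h := by
          rw [Complex.norm_real, Real.norm_eq_abs, abs_of_pos hh0]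
        rw [h6] at h1
        rw [hC₁def]
        have hb1 : ‖(aeval z (derivative b) : ℂ)‖ * ‖Complex.exp (-(h:ℂ)*z) - 1‖
            ≤ CB' * (2*(h*R)) := mul_le_mul h4 h2 (norm_nonneg _) hCB'0
        have hb2 : h * (‖(aeval z b : ℂ)‖ * ‖Complex.exp (-(h:ℂ)*z)‖) ≤ h * (CB * 3) :=
          mul_le_mul_of_nonneg_left (mul_le_mul h5 h3 (norm_nonneg _) hCB0) hh0.le
        nlinarith [h1, hb1, hb2]
      have hFdiff : ‖F z - P.eval z‖ ≤ CB*(2*(h*R)) := hFP z hzR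
      rw [hdP, div_sub_div _ _ hFz hPz, norm_div, norm_mul]
      have hnum : ‖deriv F z * P.eval z - F z * (derivative P).eval z‖ ≤ h * C₂ := by
        have e : deriv F z * P.eval z - F z * (derivative P).eval z
            = (deriv F z - (derivative P).eval z) * P.eval z
              - (derivative P).eval z * (F z - P.eval z) := by ring
        rw [e]
        have h1 := norm_sub_le ((deriv F z - (derivative P).eval z) * P.eval z)
          ((derivative P).eval z * (F z - P.eval z))
        rw [norm_mul, norm_mul] at h1
        have h2 : ‖P.eval z‖ ≤ CP := hCP z hzcb
        have h3 : ‖(derivative P).eval z‖ ≤ CPd := hCPd z hzcb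
        rw [hC₂def]
        have hb1 : ‖deriv F z - (derivative P).eval z‖ * ‖P.eval z‖ ≤ (h*C₁) * CP :=
          mul_le_mul hDdiff h2 (norm_nonneg _) (by nlinarith)
        have hb2 : ‖(derivative P).eval z‖ * ‖F z - P.eval z‖ ≤ CPd * (CB*(2*(h*R))) :=
          mul_le_mul h3 hFdiff (norm_nonneg _) hCPd0
        nlinarith [h1, hb1, hb2]
      have hden : (ε/2)*ε ≤ ‖F z‖ * ‖P.eval z‖ :=
        mul_le_mul hFz_lb hPz_lb hε0.le (norm_nonneg _)
      calc ‖deriv F z * P.eval z - F z * (derivative P).eval z‖ / (‖F z‖ * ‖P.eval z‖)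
          ≤ (h*C₂)/((ε/2)*ε) := by
            apply div_le_div₀ (by nlinarith) hnum (by nlinarith) hden
        _ ≤ 1/(2*δ) := by
            rw [div_le_div_iff₀ (by nlinarith) (by nlinarith)]
            nlinarith
    have hint1 : CircleIntegrable (fun z => deriv F z / F z) w δ :=
      ContinuousOn.circleIntegrable hδ0.le (fun z hz =>
        ((logDeriv_analyticAt F (hA h) z (hsphF w hw z hz)).continuousAt).continuousWithinAt)
    have hint0 : CircleIntegrable (fun z => deriv (fun u : ℂ => P.eval u) z / P.eval z) w δ :=
      ContinuousOn.circleIntegrable hδ0.le (fun z hz =>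
        ((logDeriv_analyticAt _ hF₀e z (hQP z (hsphQ w hw z hz))).continuousAt).continuousWithinAt)
    have hsubint := circleIntegral.integral_sub hint1 hint0
    have hbnd := circleIntegral.norm_integral_le_of_norm_le_const (c := w) (R := δ)
      (C := 1/(2*δ))
      (f := fun z => deriv F z / F z - deriv (fun u : ℂ => P.eval u) z / P.eval z)
      hδ0.le hptb
    rw [hsubint] at hbnd
    set N : ℕ := ∑ z ∈ Zw, (analyticOrderAt F z).toNat with hN
    have hsumcast : (∑ z ∈ Zw, (((analyticOrderAt F z).toNat : ℂ))) = (N : ℂ) := by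
      rw [hN]; push_cast; rfl
    rw [hsumcast] at hAPh
    rw [hAPh, hAP0] at hbnd
    -- deduce N = rootMultiplicity
    have hπ := Real.pi_pos
    have e2 : (2*(Real.pi:ℂ)*Complex.I) * (N:ℂ)
        - (2*(Real.pi:ℂ)*Complex.I) * ((P.rootMultiplicity w : ℕ):ℂ)
        = ((2*Real.pi : ℝ):ℂ) * Complex.I * ((((N:ℝ) - (P.rootMultiplicity w : ℝ)) : ℝ):ℂ) := by
      push_cast; ring
    rw [e2] at hbnd
    rw [norm_mul, norm_mul, Complex.norm_real, Complex.norm_I, mul_one,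
      Complex.norm_real] at hbnd
    rw [Real.norm_eq_abs, Real.norm_eq_abs, abs_of_pos (by linarith)] at hbnd
    show N = P.rootMultiplicity w
    by_contra hne
    have hne' : (N:ℤ) ≠ (P.rootMultiplicity w : ℤ) := by exact_mod_cast hne
    have h1 : (1:ℤ) ≤ |(N:ℤ) - (P.rootMultiplicity w:ℤ)| := Int.one_le_abs (sub_ne_zero.mpr hne')
    have h1' : (1:ℝ) ≤ |(N:ℝ) - (P.rootMultiplicity w:ℝ)| := by
      exact_mod_cast h1
    have hfs : 2*Real.pi*δ*(1/(2*δ)) = Real.pi := by field_simp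
    rw [hfs] at hbnd
    nlinarith
  -- skolemize
  have hchoice : ∀ w : ℂ, ∃ Zw : Finset ℂ, w ∈ T →
      ((∀ z, z ∈ Zw ↔ (z ∈ ball w δ ∧ F z = 0)) ∧
        (∑ z ∈ Zw, (analyticOrderAt F z).toNat = P.rootMultiplicity w)) := by
    intro w
    by_cases hw : w ∈ T
    · obtain ⟨Zw, hZw⟩ := hcount w hw
      exact ⟨Zw, fun _ => hZw⟩
    · exact ⟨∅, fun hcon => absurd hcon hw⟩
  choose ZF hZF using hchoice
  refine ⟨T.biUnion ZF, ?_, ?_, ?_⟩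
  · intro s
    constructor
    · intro hs
      obtain ⟨w, hwT, hsw⟩ := Finset.mem_biUnion.mp hs
      have hspec := ((hZF w hwT).1 s).mp hsw
      exact ⟨hball_re w hwT s (ball_subset_closedBall hspec.1), hspec.2⟩
    · rintro ⟨h1, h2⟩
      obtain ⟨w, hwT, hball⟩ := hzero_ball s h2 h1.le
      exact Finset.mem_biUnion.mpr ⟨w, hwT, ((hZF w hwT).1 s).mpr ⟨hball, h2⟩⟩
  · rw [Finset.sum_biUnion]
    · rw [← hsumT]
      apply Finset.sum_congr rfl
      intro w hw
      exact (hZF w hw).2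
    · intro w hwT u huT hwu
      simp only [Function.onFun]
      rw [Finset.disjoint_left]
      intro z hzw hzu
      have h1 := ((hZF w (Finset.mem_coe.mp hwT)).1 z).mp hzw
      have h2 := ((hZF u (Finset.mem_coe.mp huT)).1 z).mp hzu
      have hsep := hδsep w (Finset.mem_coe.mp hwT) u (Finset.mem_coe.mp huT) hwu
      have h3 : dist w u ≤ dist z w + dist z u := dist_triangle_left _ _ _
      rw [mem_ball] at h1 h2
      have := h1.1; have := h2.1
      linarith [h1.1, h2.1]
  · intro s h0 hnZ
    by_contra hge
    push_neg at hge
    obtain ⟨w, hwT, hball⟩ := hzero_ball s h0 hge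
    exact hnZ (Finset.mem_biUnion.mpr ⟨w, hwT, ((hZF w hwT).1 s).mpr ⟨hball, h0⟩⟩)
end

section
/- Let a and b be polynomials with real coefficients with deg a > deg b, and let f(s,h) = a(s) + b(s)·exp(−h·s). Let h > 0, σ₀ ∈ ℝ, ε > 0 with ε·(1 + exp(−h·σ₀)) < 1, and let s ∈ ℂ satisfy Re(s) ≥ σ₀, a(s) + b(s) ≠ 0, and |b(s)| ≤ ε·|a(s) + b(s)|. Then |a(s) + b(s)·exp(−h·s)| ≥ |b(s)|·(ε⁻¹ − 1 − exp(−h·σ₀)) and in fact f(s,h) ≠ 0. -/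
open Polynomial Complex

theorem stmt2 (a b : Polynomial ℝ) (hdeg : b.degree < a.degree)
    (h σ₀ ε : ℝ) (hh : 0 < h) (hε : 0 < ε)
    (hεcond : ε * (1 + Real.exp (-h * σ₀)) < 1)
    (s : ℂ) (hs : σ₀ ≤ s.re)
    (hab : aeval s a + aeval s b ≠ 0)
    (hb : ‖aeval s b‖ ≤ ε * ‖aeval s a + aeval s b‖) :
    ‖aeval s b‖ * (ε⁻¹ - 1 - Real.exp (-h * σ₀)) ≤
      ‖qpoly a b s h‖ ∧ qpoly a b s h ≠ 0 := by
  set A := (aeval s a : ℂ) with hA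
  set B := (aeval s b : ℂ) with hB
  set E := Complex.exp (-(h : ℂ) * s) with hEdef
  have hE : ‖E‖ ≤ Real.exp (-h * σ₀) := by
    rw [hEdef, Complex.norm_exp]
    apply Real.exp_le_exp.2
    have : (-(h : ℂ) * s).re = -h * s.re := by simp
    rw [this]
    nlinarith
  have hεpos : 0 < ε⁻¹ := inv_pos.2 hε
  have hkey : ε⁻¹ * ‖B‖ ≤ ‖A + B‖ := by
    rw [inv_mul_le_iff₀ hε]
    exact hb
  have hq : qpoly a b s h = (A + B) + B * (E - 1) := by
    simp only [qpoly, hA, hB, hEdef]; ring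
  have htri : ‖A + B‖ - ‖B * (E - 1)‖ ≤
      ‖qpoly a b s h‖ := by
    rw [hq]
    have := norm_add_le ((A + B) + B * (E - 1)) (-(B * (E - 1)))
    rw [add_neg_cancel_right, norm_neg] at this
    linarith
  have hBE : ‖B * (E - 1)‖ ≤
      ‖B‖ * (1 + Real.exp (-h * σ₀)) := by
    rw [norm_mul]
    apply mul_le_mul_of_nonneg_left _ (norm_nonneg B)
    have h3 : ‖E - 1‖ ≤ ‖E‖ + 1 := by
      have := norm_add_le E (-1)
      simpa [sub_eq_add_neg] using this
    linarith
  have hmain : ‖B‖ * (ε⁻¹ - 1 - Real.exp (-h * σ₀)) ≤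
      ‖qpoly a b s h‖ := by
    nlinarith [norm_nonneg B]
  refine ⟨hmain, ?_⟩
  by_cases hB0 : B = 0
  · have : qpoly a b s h = A + B := by rw [hq, hB0]; ring
    rw [this]; exact hab
  · intro hz
    rw [hz, norm_zero] at hmain
    have hBpos : 0 < ‖B‖ := norm_pos_iff.mpr hB0
    have hpos : 0 < ε⁻¹ - 1 - Real.exp (-h * σ₀) := by
      have : ε * (1 + Real.exp (-h * σ₀)) < ε * ε⁻¹ := by
        rw [mul_inv_cancel₀ (ne_of_gt hε)]; exact hεcond
      have := (mul_lt_mul_iff_right₀ hε).1 this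
      linarith
    nlinarith
end

section
/- Let a and b be polynomials with real coefficients with deg a > deg b, and let f(s,h) = a(s) + b(s)·exp(−h·s). Let γ : ℝ → ℂ be differentiable at h₀ ∈ ℝ with f(γ(h), h) = 0 for all h in a neighborhood of h₀. Set s₀ = γ(h₀) and suppose a(s₀) ≠ 0, b(s₀) ≠ 0, and a'(s₀)/a(s₀) − b'(s₀)/b(s₀) + h₀ ≠ 0. Then |γ'(h₀)| = |s₀| / |a'(s₀)/a(s₀) − b'(s₀)/b(s₀) + h₀|. -/
open Polynomial Complex

theorem stmt3 (a b : Polynomial ℝ) (hdeg : b.degree < a.degree)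
    (γ : ℝ → ℂ) (h₀ : ℝ) (γ' : ℂ) (hγ : HasDerivAt γ γ' h₀)
    (hzero : ∀ᶠ h in nhds h₀, qpoly a b (γ h) h = 0)
    (s₀ : ℂ) (hs₀ : s₀ = γ h₀)
    (ha : aeval s₀ a ≠ 0) (hb : aeval s₀ b ≠ 0)
    (hden : aeval s₀ (derivative a) / aeval s₀ a
        - aeval s₀ (derivative b) / aeval s₀ b + (h₀ : ℂ) ≠ 0) :
    ‖γ'‖ = ‖s₀‖ /
      ‖(aeval s₀ (derivative a) / aeval s₀ a
        - aeval s₀ (derivative b) / aeval s₀ b + (h₀ : ℂ))‖ := by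
  set A := a.map (algebraMap ℝ ℂ) with hA
  set B := b.map (algebraMap ℝ ℂ) with hB
  have haev : ∀ (p : Polynomial ℝ) (s : ℂ),
      aeval s p = (p.map (algebraMap ℝ ℂ)).eval s := by
    intro p s
    rw [Polynomial.eval_map, Polynomial.aeval_def]
  -- derivative of inner of exp
  have hofReal : HasDerivAt (fun h : ℝ => (h : ℂ)) 1 h₀ := by
    exact Complex.ofRealCLM.hasDerivAt
  have hinner : HasDerivAt (fun h : ℝ => -(h : ℂ) * γ h)
      (-(1 * γ h₀ + (h₀ : ℂ) * γ')) h₀ := by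
    exact (hofReal.neg.mul hγ).congr_deriv (by simp only [Pi.neg_apply]; ring)
  have hexp : HasDerivAt (fun h : ℝ => Complex.exp (-(h : ℂ) * γ h))
      (Complex.exp (-(h₀ : ℂ) * γ h₀) * (-(1 * γ h₀ + (h₀ : ℂ) * γ'))) h₀ :=
    hinner.cexp
  have hAe : HasDerivAt (fun h : ℝ => A.eval (γ h)) (A.derivative.eval (γ h₀) * γ') h₀ :=
    (A.hasDerivAt (γ h₀)).comp h₀ hγ
  have hBe : HasDerivAt (fun h : ℝ => B.eval (γ h)) (B.derivative.eval (γ h₀) * γ') h₀ :=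
    (B.hasDerivAt (γ h₀)).comp h₀ hγ
  have hF : HasDerivAt (fun h : ℝ => qpoly a b (γ h) h)
      (A.derivative.eval (γ h₀) * γ' +
        (B.derivative.eval (γ h₀) * γ' * Complex.exp (-(h₀ : ℂ) * γ h₀) +
         B.eval (γ h₀) * (Complex.exp (-(h₀ : ℂ) * γ h₀) * (-(1 * γ h₀ + (h₀ : ℂ) * γ'))))) h₀ := by
    have h' := hAe.add (hBe.mul hexp)
    have hfun : (fun h : ℝ => qpoly a b (γ h) h) =
        fun h : ℝ => A.eval (γ h) + B.eval (γ h) * Complex.exp (-(h : ℂ) * γ h) := by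
      funext h
      simp only [qpoly, haev, hA, hB]
    rw [hfun]
    exact h'
  have hF0 : HasDerivAt (fun h : ℝ => qpoly a b (γ h) h) 0 h₀ := by
    have : (fun h : ℝ => qpoly a b (γ h) h) =ᶠ[nhds h₀] fun _ => (0 : ℂ) := hzero
    exact this.hasDerivAt_iff.mpr (hasDerivAt_const h₀ 0)
  have hder0 := hF.unique hF0
  -- notation
  set A₀ := aeval s₀ a with hA₀
  set B₀ := aeval s₀ b with hB₀
  set A₁ := aeval s₀ (derivative a) with hA₁
  set B₁ := aeval s₀ (derivative b) with hB₁
  set E := Complex.exp (-(h₀ : ℂ) * s₀) with hE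
  have hEeq : A₀ + B₀ * E = 0 := by
    have := hzero.self_of_nhds
    simpa [qpoly, ← hs₀, hA₀, hB₀, hE] using this
  have haevd : ∀ p : Polynomial ℝ,
      (p.map (algebraMap ℝ ℂ)).derivative.eval s₀ = aeval s₀ (derivative p) := by
    intro p
    rw [Polynomial.derivative_map]
    exact (haev _ _).symm
  have heq2 : A₁ * γ' + (B₁ * γ' * E + B₀ * (E * (-(1 * s₀ + (h₀ : ℂ) * γ')))) = 0 := by
    rw [← hder0, ← hs₀] at *
    rw [hA₁, hB₁, ← haevd a, ← haevd b, hB₀, haev b, hE]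
  have hEne : E ≠ 0 := Complex.exp_ne_zero _
  have key : γ' * (A₁ / A₀ - B₁ / B₀ + (h₀ : ℂ)) = -s₀ := by
    field_simp
    linear_combination (B₀ : ℂ) * heq2 - (B₁ * γ' + B₀ * (-(1*s₀ + (h₀:ℂ)*γ'))) * hEeq
  have hγ'eq : γ' = -s₀ / (A₁ / A₀ - B₁ / B₀ + (h₀ : ℂ)) := by
    exact (eq_div_iff hden).mpr key
  rw [hγ'eq, norm_div, norm_neg]
end

section
/- Let a and b be polynomials with real coefficients with deg a > deg b, and let f(s,h) = a(s) + b(s)·exp(−h·s), with partial derivatives f_s(s,h) = a'(s) + (b'(s) − h·b(s))·exp(−h·s) and f_h(s,h) = −b(s)·s·exp(−h·s). Let γ : ℝ → ℂ be differentiable on an open interval I, suppose f_s(γ(h), h) ≠ 0 for all h ∈ I, and suppose γ satisfies the ODE γ'(h) = −(f_h(γ(h), h) + f(γ(h), h)) / f_s(γ(h), h) on I. Then the real-valued function V(h) = (1/2)·|f(γ(h), h)|² is differentiable on I with V'(h) = −|f(γ(h), h)|² ≤ 0 for all h ∈ I; in particular V is nonincreasing on I. -/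
open Polynomial Complex

/-- Partial derivative of the quasi-polynomial with respect to `s`. -/
noncomputable def qpolyS (a b : Polynomial ℝ) (s : ℂ) (h : ℝ) : ℂ :=
  aeval s (derivative a) + (aeval s (derivative b) - (h : ℂ) * aeval s b)
    * Complex.exp (-(h : ℂ) * s)

/-- Partial derivative of the quasi-polynomial with respect to `h`. -/
noncomputable def qpolyH (a b : Polynomial ℝ) (s : ℂ) (h : ℝ) : ℂ :=
  -(aeval s b) * s * Complex.exp (-(h : ℂ) * s)

theorem stmt4 (a b : Polynomial ℝ) (hdeg : b.degree < a.degree)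
    (l u : ℝ) (γ : ℝ → ℂ)
    (hfs : ∀ h ∈ Set.Ioo l u, qpolyS a b (γ h) h ≠ 0)
    (hode : ∀ h ∈ Set.Ioo l u, HasDerivAt γ
      (-((qpolyH a b (γ h) h + qpoly a b (γ h) h) / qpolyS a b (γ h) h)) h) :
    (∀ h ∈ Set.Ioo l u,
      HasDerivAt (fun t => (1 / 2 : ℝ) * ‖qpoly a b (γ t) t‖ ^ 2)
        (-(‖qpoly a b (γ h) h‖ ^ 2)) h ∧
      -(‖qpoly a b (γ h) h‖ ^ 2) ≤ 0) ∧
    AntitoneOn (fun t => (1 / 2 : ℝ) * ‖qpoly a b (γ t) t‖ ^ 2)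
      (Set.Ioo l u) := by
  have key : ∀ h ∈ Set.Ioo l u,
      HasDerivAt (fun t => qpoly a b (γ t) t) (-(qpoly a b (γ h) h)) h := by
    intro h hh
    have hγ := hode h hh
    set γ' := -((qpolyH a b (γ h) h + qpoly a b (γ h) h) / qpolyS a b (γ h) h) with hγ'
    have ha : HasDerivAt (fun t => aeval (γ t) a)
        ((aeval (γ h) (derivative a)) * γ') h := by
      have := ((a.map (algebraMap ℝ ℂ)).hasDerivAt (γ h)).comp h hγ
      simpa [Polynomial.derivative_map, Polynomial.eval_map, ← Polynomial.aeval_def,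
        Function.comp_def] using this
    have hb : HasDerivAt (fun t => aeval (γ t) b)
        ((aeval (γ h) (derivative b)) * γ') h := by
      have := ((b.map (algebraMap ℝ ℂ)).hasDerivAt (γ h)).comp h hγ
      simpa [Polynomial.derivative_map, Polynomial.eval_map, ← Polynomial.aeval_def,
        Function.comp_def] using this
    have h1 : HasDerivAt (fun t : ℝ => -(t : ℂ)) (-1) h := by
      exact (Complex.ofRealCLM.hasDerivAt (x := h)).neg.congr_deriv (by simp)
    have hmul : HasDerivAt (fun t : ℝ => -(t : ℂ) * γ t)
        ((-1) * γ h + (-(h : ℂ)) * γ') h := h1.mul hγ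
    have hexp : HasDerivAt (fun t : ℝ => Complex.exp (-(t : ℂ) * γ t))
        (Complex.exp (-(h : ℂ) * γ h) * ((-1) * γ h + (-(h : ℂ)) * γ')) h := by
      simpa [Function.comp_def] using (Complex.hasDerivAt_exp (-(h : ℂ) * γ h)).comp h hmul
    have hG := ha.add (hb.mul hexp)
    have hval : (aeval (γ h) (derivative a)) * γ' +
        ((aeval (γ h) (derivative b)) * γ' * Complex.exp (-(h : ℂ) * γ h) +
          aeval (γ h) b * (Complex.exp (-(h : ℂ) * γ h) * ((-1) * γ h + (-(h : ℂ)) * γ')))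
        = -(qpoly a b (γ h) h) := by
      have hne := hfs h hh
      have hms : γ' * qpolyS a b (γ h) h = -(qpolyH a b (γ h) h + qpoly a b (γ h) h) := by
        rw [hγ']
        field_simp
      simp only [qpoly, qpolyS, qpolyH] at hms ⊢
      linear_combination hms
    rw [hval] at hG
    exact hG.congr_deriv rfl
  constructor
  · intro h hh
    have hgh := key h hh
    have hre : HasDerivAt (fun t => (qpoly a b (γ t) t).re) (-(qpoly a b (γ h) h).re) h := by
      simpa [Function.comp_def] using (Complex.reCLM.hasFDerivAt.comp_hasDerivAt h hgh)
    have him : HasDerivAt (fun t => (qpoly a b (γ t) t).im) (-(qpoly a b (γ h) h).im) h := by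
      simpa [Function.comp_def] using (Complex.imCLM.hasFDerivAt.comp_hasDerivAt h hgh)
    have hV := (((hre.pow 2).add (him.pow 2)).const_mul (1/2 : ℝ))
    have hfun : (fun t => (1 / 2 : ℝ) * ‖qpoly a b (γ t) t‖ ^ 2)
        = fun t => (1/2 : ℝ) * ((qpoly a b (γ t) t).re ^ 2 + (qpoly a b (γ t) t).im ^ 2) := by
      funext t
      rw [Complex.sq_norm, Complex.normSq_apply]
      ring
    refine ⟨?_, neg_nonpos.2 (by positivity)⟩
    rw [hfun]
    convert hV using 1
    · rfl
    · rfl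
    · rfl
    rw [Complex.sq_norm, Complex.normSq_apply]
    ring
  · have main : ∀ h ∈ Set.Ioo l u,
        HasDerivAt (fun t => (1 / 2 : ℝ) * ‖qpoly a b (γ t) t‖ ^ 2)
          (-(‖qpoly a b (γ h) h‖ ^ 2)) h := by
      intro h hh
      have hgh := key h hh
      have hre : HasDerivAt (fun t => (qpoly a b (γ t) t).re) (-(qpoly a b (γ h) h).re) h := by
        simpa [Function.comp_def] using (Complex.reCLM.hasFDerivAt.comp_hasDerivAt h hgh)
      have him : HasDerivAt (fun t => (qpoly a b (γ t) t).im) (-(qpoly a b (γ h) h).im) h := by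
        simpa [Function.comp_def] using (Complex.imCLM.hasFDerivAt.comp_hasDerivAt h hgh)
      have hV := (((hre.pow 2).add (him.pow 2)).const_mul (1/2 : ℝ))
      have hfun : (fun t => (1 / 2 : ℝ) * ‖qpoly a b (γ t) t‖ ^ 2)
          = fun t => (1/2 : ℝ) * ((qpoly a b (γ t) t).re ^ 2 + (qpoly a b (γ t) t).im ^ 2) := by
        funext t
        rw [Complex.sq_norm, Complex.normSq_apply]
        ring
      rw [hfun]
      convert hV using 1
      · rfl
      · rfl
      · rfl
      rw [Complex.sq_norm, Complex.normSq_apply]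
      ring
    apply antitoneOn_of_deriv_nonpos (convex_Ioo l u)
    · exact fun x hx => ((main x hx).differentiableAt.continuousAt).continuousWithinAt
    · rw [interior_Ioo]
      exact fun x hx => (main x hx).differentiableAt.differentiableWithinAt
    · rw [interior_Ioo]
      intro x hx
      rw [(main x hx).deriv]
      exact neg_nonpos.2 (by positivity)
end

section
/- Let a and b be polynomials with real coefficients with deg a > deg b, and let f(s,h) = a(s) + b(s)·exp(−h·s), with partial derivatives f_s(s,h) = a'(s) + (b'(s) − h·b(s))·exp(−h·s) and f_h(s,h) = −b(s)·s·exp(−h·s). Let γ : ℝ → ℂ be differentiable on an open interval I, suppose f_s(γ(h), h) ≠ 0 for all h ∈ I, and suppose γ satisfies the ODE γ'(h) = −(f_h(γ(h), h) + f(γ(h), h)) / f_s(γ(h), h) on I. Then for all h₀, h ∈ I one has f(γ(h), h) = f(γ(h₀), h₀)·exp(−(h − h₀)). -/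
open Polynomial Complex

lemma aeval_hasDerivAt (p : Polynomial ℝ) (s : ℂ) :
    HasDerivAt (fun z : ℂ => (aeval z p : ℂ)) (aeval s (derivative p)) s := by
  have h := (p.map (algebraMap ℝ ℂ)).hasDerivAt s
  rw [Polynomial.derivative_map] at h
  simp only [Polynomial.eval_map, ← Polynomial.aeval_def] at h
  exact h

theorem stmt6 (a b : Polynomial ℝ) (hdeg : b.degree < a.degree)
    (l u : ℝ) (γ : ℝ → ℂ)
    (hfs : ∀ h ∈ Set.Ioo l u, qpolyS a b (γ h) h ≠ 0)
    (hode : ∀ h ∈ Set.Ioo l u, HasDerivAt γ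
      (-((qpolyH a b (γ h) h + qpoly a b (γ h) h) / qpolyS a b (γ h) h)) h) :
    ∀ h₀ ∈ Set.Ioo l u, ∀ h ∈ Set.Ioo l u,
      qpoly a b (γ h) h = qpoly a b (γ h₀) h₀ * Complex.exp (-((h : ℂ) - (h₀ : ℂ))) := by
  set F : ℝ → ℂ := fun t => qpoly a b (γ t) t * Complex.exp (t : ℂ) with hF
  have key : ∀ t ∈ Set.Ioo l u, HasDerivAt F 0 t := by
    intro t ht
    have hfs' := hfs t ht
    have hγ := hode t ht
    set d : ℂ := -((qpolyH a b (γ t) t + qpoly a b (γ t) t) / qpolyS a b (γ t) t) with hd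
    have hA : HasDerivAt (fun v : ℝ => (aeval (γ v) a : ℂ))
        (aeval (γ t) (derivative a) * d) t :=
      (aeval_hasDerivAt a (γ t)).comp t hγ
    have hB : HasDerivAt (fun v : ℝ => (aeval (γ v) b : ℂ))
        (aeval (γ t) (derivative b) * d) t :=
      (aeval_hasDerivAt b (γ t)).comp t hγ
    have hcoe : HasDerivAt (fun v : ℝ => (v : ℂ)) 1 t := Complex.ofRealCLM.hasDerivAt
    have hmul : HasDerivAt (fun v : ℝ => -(v : ℂ) * γ v) (-(γ t) + -(t : ℂ) * d) t := by
      exact (hcoe.neg.mul hγ).congr_deriv (by rw [Pi.neg_apply]; ring)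
    have hexp : HasDerivAt (fun v : ℝ => Complex.exp (-(v : ℂ) * γ v))
        (Complex.exp (-(t : ℂ) * γ t) * (-(γ t) + -(t : ℂ) * d)) t :=
      (Complex.hasDerivAt_exp _).comp t hmul
    have hq : HasDerivAt (fun v : ℝ => qpoly a b (γ v) v)
        (aeval (γ t) (derivative a) * d +
          (aeval (γ t) (derivative b) * d * Complex.exp (-(t : ℂ) * γ t)
            + aeval (γ t) b * (Complex.exp (-(t : ℂ) * γ t) * (-(γ t) + -(t : ℂ) * d)))) t := by
      exact hA.add (hB.mul hexp)
    have hq' : HasDerivAt (fun v : ℝ => qpoly a b (γ v) v) (-(qpoly a b (γ t) t)) t := by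
      convert hq using 1
      have hdval : d * qpolyS a b (γ t) t = -(qpolyH a b (γ t) t + qpoly a b (γ t) t) := by
        rw [hd]; field_simp
      simp only [qpoly, qpolyS, qpolyH] at hdval ⊢
      ring_nf at hdval ⊢
      linear_combination -hdval
    have hexpF : HasDerivAt (fun v : ℝ => Complex.exp (v : ℂ)) (Complex.exp (t : ℂ)) t := by
      exact ((Complex.hasDerivAt_exp (t : ℂ)).comp t hcoe).congr_deriv (mul_one _)
    have : HasDerivAt F (-(qpoly a b (γ t) t) * Complex.exp (t : ℂ)
        + qpoly a b (γ t) t * Complex.exp (t : ℂ)) t := hq'.mul hexpF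
    simpa using this
  intro h₀ hh₀ h hh
  have hconst : F h = F h₀ := by
    apply (convex_Ioo l u).is_const_of_fderivWithin_eq_zero (𝕜 := ℝ)
      (fun t ht => (key t ht).differentiableAt.differentiableWithinAt) _ hh hh₀
    intro t ht
    rw [fderivWithin_of_isOpen isOpen_Ioo ht, (key t ht).hasFDerivAt.fderiv]
    ext x
    simp
  have hF' : qpoly a b (γ h) h * Complex.exp (h : ℂ)
      = qpoly a b (γ h₀) h₀ * Complex.exp (h₀ : ℂ) := hconst
  apply mul_right_cancel₀ (Complex.exp_ne_zero (h : ℂ))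
  rw [hF', mul_assoc, ← Complex.exp_add]
  ring_nf
end

section
/- Let a and b be polynomials with real coefficients with deg a > deg b, and let f(s,h) = a(s) + b(s)·exp(−h·s), with partial derivatives f_s(s,h) = a'(s) + (b'(s) − h·b(s))·exp(−h·s) and f_h(s,h) = −b(s)·s·exp(−h·s). Let γ : ℝ → ℂ be differentiable on an open interval I, suppose f_s(γ(h), h) ≠ 0 for all h ∈ I, and suppose γ satisfies the ODE γ'(h) = −(f_h(γ(h), h) + f(γ(h), h)) / f_s(γ(h), h) on I. If f(γ(h₀), h₀) = 0 for some h₀ ∈ I, then f(γ(h), h) = 0 for all h ∈ I; that is, a solution of the ODE starting at a zero of the quasi-polynomial remains on the zero set. -/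
open Polynomial Complex

private lemma aeval_hasDerivAt_s7 (p : Polynomial ℝ) (γ : ℝ → ℂ) (γ' : ℂ) (h : ℝ)
    (hγ : HasDerivAt γ γ' h) :
    HasDerivAt (fun t => aeval (γ t) p) (aeval (γ h) (derivative p) * γ') h := by
  have h1 : HasDerivAt (fun s : ℂ => aeval s p) (aeval (γ h) (derivative p)) (γ h) := by
    have h2 := Polynomial.hasDerivAt (p.map (algebraMap ℝ ℂ)) (γ h)
    rw [derivative_map] at h2
    simp only [aeval_def, ← Polynomial.eval_map]
    exact h2
  exact h1.comp h hγ

theorem stmt7 (a b : Polynomial ℝ) (hdeg : b.degree < a.degree)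
    (l u : ℝ) (γ : ℝ → ℂ)
    (hfs : ∀ h ∈ Set.Ioo l u, qpolyS a b (γ h) h ≠ 0)
    (hode : ∀ h ∈ Set.Ioo l u, HasDerivAt γ
      (-((qpolyH a b (γ h) h + qpoly a b (γ h) h) / qpolyS a b (γ h) h)) h)
    (h₀ : ℝ) (hh₀ : h₀ ∈ Set.Ioo l u) (hzero : qpoly a b (γ h₀) h₀ = 0) :
    ∀ h ∈ Set.Ioo l u, qpoly a b (γ h) h = 0 := by
  set g : ℝ → ℂ := fun h => qpoly a b (γ h) h with hg
  have hgd : ∀ h ∈ Set.Ioo l u, HasDerivAt g (-(g h)) h := by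
    intro h hm
    have hγ := hode h hm
    set γ' : ℂ := -((qpolyH a b (γ h) h + qpoly a b (γ h) h) / qpolyS a b (γ h) h) with hγ'
    have hA := aeval_hasDerivAt_s7 a γ γ' h hγ
    have hB := aeval_hasDerivAt_s7 b γ γ' h hγ
    have hlin : HasDerivAt (fun t : ℝ => -(t : ℂ) * γ t) (-(γ h) + -(h:ℂ) * γ') h := by
      have h1 : HasDerivAt (fun t : ℝ => -(t : ℂ)) (-1) h := by
        simpa using (hasDerivAt_id h).ofReal_comp.fun_neg
      simpa using h1.fun_mul hγ
    have hE := hlin.cexp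
    have hD := hA.add (hB.mul hE)
    have key : aeval (γ h) (derivative a) * γ' +
        (aeval (γ h) (derivative b) * γ' * Complex.exp (-(h:ℂ) * γ h) +
          aeval (γ h) b * (Complex.exp (-(h:ℂ) * γ h) * (-(γ h) + -(h:ℂ) * γ'))) = -(g h) := by
      have hS := hfs h hm
      have : γ' * qpolyS a b (γ h) h = -(qpolyH a b (γ h) h + qpoly a b (γ h) h) := by
        rw [hγ']; field_simp
      simp only [hg, qpoly, qpolyS, qpolyH] at this ⊢
      linear_combination this
    rw [key] at hD
    exact hD
  -- F h = exp h * g h has derivative zero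
  set F : ℝ → ℂ := fun h => Complex.exp (h : ℂ) * g h with hF
  have hFd : ∀ h ∈ Set.Ioo l u, HasDerivAt F 0 h := by
    intro h hm
    have he : HasDerivAt (fun t : ℝ => Complex.exp (t : ℂ)) (Complex.exp (h : ℂ)) h := by
      simpa using (Complex.ofRealCLM.hasDerivAt (x := h)).cexp
    have hm2 := he.fun_mul (hgd h hm)
    convert hm2 using 1
    · rfl
    ring
  have hconst : ∀ h ∈ Set.Ioo l u, F h = F h₀ := by
    intro h hm
    have hO : IsOpen (Set.Ioo l u) := isOpen_Ioo
    refine (convex_Ioo l u).is_const_of_fderivWithin_eq_zero (𝕜 := ℝ)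
      (fun x hx => ((hFd x hx).differentiableAt.differentiableWithinAt)) ?_ hm hh₀
    intro x hx
    rw [fderivWithin_eq_fderiv (hO.uniqueDiffWithinAt hx) (hFd x hx).differentiableAt]
    have := (hFd x hx).deriv
    ext
    simp [← toSpanSingleton_deriv, this]
  intro h hm
  have := hconst h hm
  rw [hF] at this
  simp only [hg] at this hzero
  rw [hzero, mul_zero] at this
  exact (mul_eq_zero.mp this).resolve_left (Complex.exp_ne_zero _)
end

section
/- Let a and b be polynomials with real coefficients with deg a > deg b, and let f(s,h) = a(s) + b(s)·exp(−h·s), with partial derivatives f_s(s,h) = a'(s) + (b'(s) − h·b(s))·exp(−h·s) and f_h(s,h) = −b(s)·s·exp(−h·s). Let s ∈ ℂ and h ∈ ℝ satisfy f(s,h) = 0, a(s) ≠ 0, b(s) ≠ 0, and b'(s)/b(s) − a'(s)/a(s) − h ≠ 0. Then f_s(s,h) ≠ 0 and −f_h(s,h)/f_s(s,h) = s / (b'(s)/b(s) − a'(s)/a(s) − h). -/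
open Polynomial Complex

theorem stmt8 (a b : Polynomial ℝ) (hdeg : b.degree < a.degree)
    (s : ℂ) (h : ℝ) (hzero : qpoly a b s h = 0)
    (ha : aeval s a ≠ 0) (hb : aeval s b ≠ 0)
    (hden : aeval s (derivative b) / aeval s b
        - aeval s (derivative a) / aeval s a - (h : ℂ) ≠ 0) :
    qpolyS a b s h ≠ 0 ∧
    -(qpolyH a b s h) / qpolyS a b s h =
      s / (aeval s (derivative b) / aeval s b
        - aeval s (derivative a) / aeval s a - (h : ℂ)) := by
  set A := aeval s a
  set B := aeval s b
  set A' := aeval s (derivative a)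
  set B' := aeval s (derivative b)
  set E := Complex.exp (-(h : ℂ) * s) with hE
  have he : B * E = -A := by
    have : A + B * E = 0 := hzero
    linear_combination this
  set D := B' / B - A' / A - (h : ℂ) with hD
  have key : qpolyS a b s h = -A * D := by
    show A' + (B' - (h : ℂ) * B) * E = -A * D
    rw [hD]
    field_simp
    linear_combination (B' - (h:ℂ)*B) * he
  have hS : qpolyS a b s h ≠ 0 := by
    rw [key]; exact mul_ne_zero (neg_ne_zero.mpr ha) hden
  refine ⟨hS, ?_⟩
  have hH : -(qpolyH a b s h) = -A * s := by
    show -(-B * s * E) = -A * s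
    linear_combination s * he
  rw [hH, key, mul_div_mul_left _ _ (neg_ne_zero.mpr ha)]
end

section
/- Let a and b be polynomials with real coefficients with deg a > deg b, and let f(s,h) = a(s) + b(s)·exp(−h·s). Let σ₀, ω, h₀ ∈ ℝ and set s₀ = σ₀ + i·ω with s₀ ≠ 0. Let γ : ℝ → ℂ be differentiable at h₀ with γ(h₀) = s₀ and f(γ(h), h) = 0 for all h in a neighborhood of h₀, and suppose a(s₀) ≠ 0, b(s₀) ≠ 0, and b'(s₀)/b(s₀) − a'(s₀)/a(s₀) − h₀ ≠ 0. Then Re(γ'(h₀)) > 0 if and only if Re[ (1/s₀)·( b'(s₀)/b(s₀) − a'(s₀)/a(s₀) − h₀ ) ] > 0; that is, the zero crosses the boundary Re(s) = σ₀ and enters the half-plane Re(s) > σ₀ exactly when this quantity is positive. -/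
open Polynomial Complex

theorem stmt9 (a b : Polynomial ℝ) (hdeg : b.degree < a.degree)
    (σ₀ ω h₀ : ℝ) (s₀ : ℂ) (hs₀def : s₀ = (σ₀ : ℂ) + Complex.I * ω)
    (hs₀ : s₀ ≠ 0)
    (γ : ℝ → ℂ) (γ' : ℂ) (hγ : HasDerivAt γ γ' h₀) (hγ0 : γ h₀ = s₀)
    (hzero : ∀ᶠ h in nhds h₀, qpoly a b (γ h) h = 0)
    (ha : aeval s₀ a ≠ 0) (hb : aeval s₀ b ≠ 0)
    (hden : aeval s₀ (derivative b) / aeval s₀ b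
        - aeval s₀ (derivative a) / aeval s₀ a - (h₀ : ℂ) ≠ 0) :
    0 < γ'.re ↔
      0 < ((1 / s₀) * (aeval s₀ (derivative b) / aeval s₀ b
        - aeval s₀ (derivative a) / aeval s₀ a - (h₀ : ℂ))).re := by
  -- derivative of the polynomial maps
  have hpa : HasDerivAt (fun z : ℂ => aeval z a) (aeval s₀ (derivative a)) (γ h₀) := by
    rw [hγ0]
    have h1 := (a.map (algebraMap ℝ ℂ)).hasDerivAt s₀
    rw [Polynomial.derivative_map] at h1
    simpa only [Polynomial.eval_map, ← Polynomial.aeval_def] using h1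
  have hpb : HasDerivAt (fun z : ℂ => aeval z b) (aeval s₀ (derivative b)) (γ h₀) := by
    rw [hγ0]
    have h1 := (b.map (algebraMap ℝ ℂ)).hasDerivAt s₀
    rw [Polynomial.derivative_map] at h1
    simpa only [Polynomial.eval_map, ← Polynomial.aeval_def] using h1
  have hca : HasDerivAt (fun h : ℝ => aeval (γ h) a) (aeval s₀ (derivative a) * γ') h₀ :=
    hpa.comp h₀ hγ
  have hcb : HasDerivAt (fun h : ℝ => aeval (γ h) b) (aeval s₀ (derivative b) * γ') h₀ :=
    hpb.comp h₀ hγ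
  have hid : HasDerivAt (fun h : ℝ => (h : ℂ)) 1 h₀ := by
    have h1 := (hasDerivAt_id h₀).ofReal_comp
    simpa using h1
  have hu : HasDerivAt (fun h : ℝ => -(h : ℂ) * γ h)
      (-1 * γ h₀ + -(h₀ : ℂ) * γ') h₀ := hid.neg.mul hγ
  have hex : HasDerivAt (fun h : ℝ => Complex.exp (-(h : ℂ) * γ h))
      (Complex.exp (-(h₀ : ℂ) * γ h₀) * (-1 * γ h₀ + -(h₀ : ℂ) * γ')) h₀ := hu.cexp
  have hprod := hcb.mul hex
  have hsum := hca.add hprod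
  have hF0 : HasDerivAt (fun h : ℝ => qpoly a b (γ h) h) 0 h₀ :=
    (hasDerivAt_const h₀ (0 : ℂ)).congr_of_eventuallyEq hzero
  have hsum' : HasDerivAt (fun h : ℝ => qpoly a b (γ h) h)
      (aeval s₀ (derivative a) * γ' +
        (aeval s₀ (derivative b) * γ' * Complex.exp (-(h₀ : ℂ) * s₀) +
          aeval s₀ b * (Complex.exp (-(h₀ : ℂ) * s₀) * (-1 * s₀ + -(h₀ : ℂ) * γ')))) h₀ := by
    have hsum2 : HasDerivAt (fun h : ℝ => aeval (γ h) a + aeval (γ h) b * Complex.exp (-(h : ℂ) * γ h)) _ h₀ := hsum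
    simpa [qpoly, hγ0] using hsum2
  have heq := hsum'.unique hF0
  have eq2 : aeval s₀ a + aeval s₀ b * Complex.exp (-(h₀ : ℂ) * s₀) = 0 := by
    have := hzero.self_of_nhds
    simpa [qpoly, hγ0] using this
  have hγ'eq : γ' = s₀ / (aeval s₀ (derivative b) / aeval s₀ b
      - aeval s₀ (derivative a) / aeval s₀ a - (h₀ : ℂ)) := by
    rw [eq_div_iff hden]
    field_simp
    linear_combination (-(aeval s₀ b)) * heq +
      (aeval s₀ (derivative b) * γ' - aeval s₀ b * s₀ - aeval s₀ b * (h₀ : ℂ) * γ') * eq2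
  set D := aeval s₀ (derivative b) / aeval s₀ b
      - aeval s₀ (derivative a) / aeval s₀ a - (h₀ : ℂ) with hD
  have hDs : s₀ / D ≠ 0 := div_ne_zero hs₀ hden
  rw [hγ'eq]
  have hinv : ((1 / s₀) * D) = (s₀ / D)⁻¹ := by field_simp
  rw [hinv, Complex.inv_re]
  have hn : 0 < Complex.normSq (s₀ / D) := normSq_pos.mpr hDs
  rw [lt_div_iff₀ hn, zero_mul]
end

section
/- Let a and b be polynomials with real coefficients with a ≠ 0 and deg a > deg b, and let f(s,h) = a(s) + b(s)·exp(−h·s). Then for every fixed h ≥ 0 and every σ₀ ∈ ℝ, the set of boundary zero-crossing frequencies { ω ∈ ℝ : f(σ₀ + i·ω, h) = 0 } is finite. -/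
open Polynomial Complex

open Filter Asymptotics Bornology Topology

lemma evalC_isEquivalent (P : ℂ[X]) :
    (fun ω : ℝ => Polynomial.eval (ω:ℂ) P) ~[cobounded ℝ]
      (fun ω : ℝ => P.leadingCoeff * (ω:ℂ) ^ P.natDegree) := by
  by_cases h : P = 0
  · simp [h, Asymptotics.IsEquivalent.refl]
  · have habs : Tendsto (fun ω : ℝ => |ω|) (cobounded ℝ) atTop := by
      exact Filter.Tendsto.congr (fun ω => Real.norm_eq_abs ω) (tendsto_norm_cobounded_atTop (E := ℝ))
    simp only [Polynomial.eval_eq_sum_range, Finset.sum_range_succ, coeff_natDegree]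
    refine IsLittleO.add_isEquivalent ?_ IsEquivalent.refl
    refine IsLittleO.fun_sum fun i hi => ?_
    have hpow : (fun ω : ℝ => ((ω:ℂ)) ^ i) =o[cobounded ℝ] fun ω => ((ω:ℂ)) ^ P.natDegree := by
      rw [← Asymptotics.isLittleO_norm_norm]
      simpa [Real.norm_eq_abs, Function.comp_def] using
        (isLittleO_pow_pow_atTop_of_lt (Finset.mem_range.mp hi)).comp_tendsto habs
    exact IsLittleO.const_mul_left
      (hpow.const_mul_right (fun hz => h (leadingCoeff_eq_zero.mp hz))) _

lemma evalC_isLittleO {P Q : ℂ[X]} (hPQ : Q.degree < P.degree) :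
    (fun ω : ℝ => Polynomial.eval (ω:ℂ) Q) =o[cobounded ℝ]
      fun ω : ℝ => Polynomial.eval (ω:ℂ) P := by
  have hP0 : P ≠ 0 := by rintro rfl; simp at hPQ
  have hmono : (fun ω : ℝ => Q.leadingCoeff * (ω:ℂ) ^ Q.natDegree) =o[cobounded ℝ]
      fun ω : ℝ => P.leadingCoeff * (ω:ℂ) ^ P.natDegree := by
    by_cases hQ0 : Q = 0
    · simpa [hQ0] using Asymptotics.isLittleO_zero _ _
    · have hlt : Q.natDegree < P.natDegree := natDegree_lt_natDegree hQ0 hPQ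
      have habs : Tendsto (fun ω : ℝ => |ω|) (cobounded ℝ) atTop := by
        exact Filter.Tendsto.congr (fun ω => Real.norm_eq_abs ω) (tendsto_norm_cobounded_atTop (E := ℝ))
      have hpow : (fun ω : ℝ => ((ω:ℂ)) ^ Q.natDegree) =o[cobounded ℝ]
          fun ω => ((ω:ℂ)) ^ P.natDegree := by
        rw [← Asymptotics.isLittleO_norm_norm]
        simpa [Real.norm_eq_abs, Function.comp_def] using
          (isLittleO_pow_pow_atTop_of_lt hlt).comp_tendsto habs
      exact IsLittleO.const_mul_left
        (hpow.const_mul_right (fun hz => hP0 (leadingCoeff_eq_zero.mp hz))) _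
  exact ((evalC_isEquivalent Q).trans_isLittleO hmono).trans_isEquivalent
    (evalC_isEquivalent P).symm

lemma evalC_key {P Q : ℂ[X]} (hPQ : Q.degree < P.degree) {c : ℝ} (hc : 0 < c) :
    ∀ᶠ ω : ℝ in cobounded ℝ, c * ‖Polynomial.eval (ω:ℂ) Q‖ < ‖Polynomial.eval (ω:ℂ) P‖ := by
  have hP0 : P ≠ 0 := by rintro rfl; simp at hPQ
  have h1 := (evalC_isLittleO hPQ).def (by positivity : (0:ℝ) < (2*c)⁻¹)
  have hroots : {ω : ℝ | Polynomial.eval (ω:ℂ) P = 0}.Finite := by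
    have : {z : ℂ | P.IsRoot z}.Finite := P.finite_setOf_isRoot hP0
    exact this.preimage Complex.ofReal_injective.injOn
  have h2 : ∀ᶠ ω : ℝ in cobounded ℝ, Polynomial.eval (ω:ℂ) P ≠ 0 := by
    have hmem : {ω : ℝ | Polynomial.eval (ω:ℂ) P = 0}ᶜ ∈ Filter.cofinite :=
      hroots.compl_mem_cofinite
    have hle : cobounded ℝ ≤ Filter.cofinite := by
      rw [Metric.cobounded_eq_cocompact]; exact Filter.cocompact_le_cofinite
    exact hle hmem
  filter_upwards [h1, h2] with ω hω hω'
  have hPpos : 0 < ‖Polynomial.eval (ω:ℂ) P‖ := norm_pos_iff.mpr hω'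
  have := mul_le_mul_of_nonneg_left hω hc.le
  have heq : c * ((2*c)⁻¹ * ‖Polynomial.eval (ω:ℂ) P‖) = ‖Polynomial.eval (ω:ℂ) P‖ / 2 := by
    field_simp
  nlinarith

theorem stmt12 (a b : Polynomial ℝ) (ha : a ≠ 0) (hdeg : b.degree < a.degree)
    (h : ℝ) (hh : 0 ≤ h) (σ₀ : ℝ) :
    {ω : ℝ | qpoly a b ((σ₀ : ℂ) + Complex.I * ω) h = 0}.Finite := by
  set q : ℂ[X] := Polynomial.C Complex.I * Polynomial.X + Polynomial.C (σ₀:ℂ) with hq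
  set P : ℂ[X] := (a.map (algebraMap ℝ ℂ)).comp q with hPdef
  set Q : ℂ[X] := (b.map (algebraMap ℝ ℂ)).comp q with hQdef
  have heval : ∀ (p : Polynomial ℝ) (z : ℂ),
      Polynomial.eval z ((p.map (algebraMap ℝ ℂ)).comp q) = aeval ((σ₀:ℂ) + Complex.I * z) p := by
    intro p z
    rw [Polynomial.eval_comp]
    simp only [hq, Polynomial.eval_add, Polynomial.eval_mul, Polynomial.eval_C, Polynomial.eval_X]
    rw [Polynomial.eval_map, ← Polynomial.aeval_def]
    congr 1; ring
  have hqdeg : q.degree = 1 := Polynomial.degree_linear Complex.I_ne_zero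
  have hq1 : q.natDegree = 1 := Polynomial.natDegree_eq_of_degree_eq_some hqdeg
  have hdegmap : ∀ p : Polynomial ℝ, ((p.map (algebraMap ℝ ℂ)).comp q).degree = p.degree := by
    intro p
    by_cases hp : p = 0
    · simp [hp]
    · have hm : p.map (algebraMap ℝ ℂ) ≠ 0 :=
        (Polynomial.map_ne_zero_iff (algebraMap ℝ ℂ).injective).mpr hp
      have hcomp : (p.map (algebraMap ℝ ℂ)).comp q ≠ 0 := by
        intro hc0
        rcases Polynomial.comp_eq_zero_iff.mp hc0 with h1 | ⟨-, hqC⟩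
        · exact hm h1
        have h2 := congrArg Polynomial.degree hqC
        rw [hqdeg] at h2
        exact absurd h2.symm (Polynomial.degree_C_le.trans_lt (by norm_num)).ne
      rw [Polynomial.degree_eq_natDegree hcomp, Polynomial.natDegree_comp, hq1, mul_one,
        Polynomial.natDegree_map_eq_of_injective (algebraMap ℝ ℂ).injective,
        ← Polynomial.degree_eq_natDegree hp]
  have hPQdeg : Q.degree < P.degree := by rw [hPdef, hQdef, hdegmap, hdegmap]; exact hdeg
  set c : ℝ := Real.exp (-(h*σ₀)) with hcdef
  have hc : 0 < c := Real.exp_pos _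
  have hnorme : ∀ z : ℂ, z.im = 0 → ‖Complex.exp (-(h:ℂ) * ((σ₀:ℂ) + Complex.I * z))‖ = c := by
    intro z hz
    rw [Complex.norm_exp]
    congr 1
    simp [Complex.mul_re, hz]
  set F : ℂ → ℂ := fun z => Polynomial.eval z P + Polynomial.eval z Q *
      Complex.exp (-(h:ℂ) * ((σ₀:ℂ) + Complex.I * z)) with hFdef
  have hFre : ∀ ω : ℝ, F (ω:ℂ) = qpoly a b ((σ₀:ℂ) + Complex.I * ω) h := by
    intro ω
    rw [hFdef]
    simp only [hPdef, hQdef, heval, qpoly]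
  have hne : ∀ᶠ ω : ℝ in cobounded ℝ, F (ω:ℂ) ≠ 0 := by
    filter_upwards [evalC_key hPQdeg hc] with ω hω hzero
    rw [hFdef] at hzero
    have hnz : ‖Polynomial.eval (ω:ℂ) P‖ = ‖Polynomial.eval (ω:ℂ) Q‖ * c := by
      have hPe : Polynomial.eval (ω:ℂ) P =
          -(Polynomial.eval (ω:ℂ) Q * Complex.exp (-(h:ℂ) * ((σ₀:ℂ) + Complex.I * ω))) := by
        linear_combination hzero
      rw [hPe, norm_neg, norm_mul, hnorme _ (by simp)]
    nlinarith [norm_nonneg (Polynomial.eval (ω:ℂ) Q)]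
  by_contra hfin
  have hinf : {ω : ℝ | qpoly a b ((σ₀ : ℂ) + Complex.I * ω) h = 0}.Infinite := hfin
  have hbdd : Bornology.IsBounded {ω : ℝ | qpoly a b ((σ₀ : ℂ) + Complex.I * ω) h = 0} := by
    rw [Bornology.isBounded_def]
    refine Filter.mem_of_superset hne ?_
    intro ω hω
    simp only [Set.mem_compl_iff, Set.mem_setOf_eq]
    rw [← hFre ω]
    exact hω
  obtain ⟨ω₀, -, hacc⟩ := hinf.exists_accPt_of_subset_isCompact
    hbdd.isCompact_closure subset_closure
  rw [accPt_iff_frequently] at hacc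
  have hacc' : ∃ᶠ ω : ℝ in 𝓝[≠] ω₀, qpoly a b ((σ₀ : ℂ) + Complex.I * ω) h = 0 := by
    rw [frequently_nhdsWithin_iff]
    refine hacc.mono fun y hy => ?_
    exact ⟨hy.2, hy.1⟩
  have htend : Filter.Tendsto (fun ω : ℝ => (ω:ℂ)) (𝓝[≠] ω₀) (𝓝[≠] ((ω₀:ℝ):ℂ)) := by
    refine ContinuousWithinAt.tendsto_nhdsWithin
      Complex.continuous_ofReal.continuousWithinAt ?_
    intro x hx hx'
    exact hx (Complex.ofReal_injective hx')
  have hfreqC : ∃ᶠ z in 𝓝[≠] ((ω₀:ℝ):ℂ), F z = 0 := by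
    refine htend.frequently (hacc'.mono fun ω hω => ?_)
    rw [hFre ω]
    exact hω
  have hF : Differentiable ℂ F := by
    refine Differentiable.add (Polynomial.differentiable P) (Differentiable.mul
      (Polynomial.differentiable Q) (Differentiable.cexp ?_))
    fun_prop
  have heqz : Set.EqOn F 0 Set.univ :=
    (analyticOnNhd_univ_iff_differentiable.mpr hF).eqOn_zero_of_preconnected_of_frequently_eq_zero
      isPreconnected_univ (Set.mem_univ _) hfreqC
  obtain ⟨ω, hω⟩ := hne.exists
  exact hω (heqz (Set.mem_univ ((ω:ℝ):ℂ)))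
end

section
/- Let a and b be polynomials with real coefficients with a ≠ 0 and deg a > deg b, and let f(s,h) = a(s) + b(s)·exp(−h·s). Then for every fixed h > 0 and every σ₀ ∈ ℝ, the set { s ∈ ℂ : Re(s) > σ₀ and f(s, h) = 0 } is finite; that is, the retarded quasi-polynomial has only finitely many zeros in any right half-plane. -/
open Polynomial Complex

lemma norm_eval_le_aux (q : ℂ[X]) (s : ℂ) (hs : 1 ≤ ‖s‖) (n : ℕ) (hn : q.natDegree ≤ n) :
    ‖q.eval s‖ ≤ (∑ i ∈ Finset.range (q.natDegree + 1), ‖q.coeff i‖) * ‖s‖ ^ n := by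
  rw [Polynomial.eval_eq_sum_range]
  calc ‖∑ i ∈ Finset.range (q.natDegree + 1), q.coeff i * s ^ i‖
      ≤ ∑ i ∈ Finset.range (q.natDegree + 1), ‖q.coeff i * s ^ i‖ := norm_sum_le _ _
    _ ≤ ∑ i ∈ Finset.range (q.natDegree + 1), ‖q.coeff i‖ * ‖s‖ ^ n := by
        refine Finset.sum_le_sum fun i hi => ?_
        rw [norm_mul, norm_pow]
        have : i ≤ n := le_trans (Nat.lt_succ_iff.mp (Finset.mem_range.mp hi)) hn
        exact mul_le_mul_of_nonneg_left (pow_le_pow_right₀ hs this) (norm_nonneg _)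
    _ = _ := by rw [← Finset.sum_mul]


lemma key_bound (p q : ℂ[X]) (hp : 0 < p.degree) (hpq : q.degree < p.degree)
    (K : ℝ) (hK : 0 ≤ K) :
    ∃ R : ℝ, ∀ s : ℂ, R < ‖s‖ → K * ‖q.eval s‖ < ‖p.eval s‖ := by
  have hp0 : p ≠ 0 := fun h => by simp [h] at hp
  set n := p.natDegree with hn
  have hn1 : 1 ≤ n := Polynomial.natDegree_pos_iff_degree_pos.mpr hp
  have hqn : q.natDegree ≤ n - 1 := by
    rcases eq_or_ne q 0 with rfl | hq0
    · simp
    · have := Polynomial.natDegree_lt_natDegree hq0 hpq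
      omega
  have hen : p.eraseLead.natDegree ≤ n - 1 := p.eraseLead_natDegree_le
  set lead : ℝ := ‖p.coeff n‖ with hlead
  have hleadpos : 0 < lead := by
    rw [hlead, norm_pos_iff]
    exact Polynomial.leadingCoeff_ne_zero.mpr hp0
  set Sq : ℝ := ∑ i ∈ Finset.range (q.natDegree + 1), ‖q.coeff i‖ with hSq
  set Se : ℝ := ∑ i ∈ Finset.range (p.eraseLead.natDegree + 1), ‖p.eraseLead.coeff i‖ with hSe
  set M : ℝ := Se + K * Sq with hM
  refine ⟨max 1 (M / lead), fun s hs => ?_⟩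
  set x : ℝ := ‖s‖ with hx
  have hx1 : 1 < x := lt_of_le_of_lt (le_max_left _ _) hs
  have hMx : M < lead * x := by
    have := lt_of_le_of_lt (le_max_right _ _) hs
    rwa [div_lt_iff₀ hleadpos, mul_comm] at this
  have hxpow : (0:ℝ) < x ^ (n - 1) := pow_pos (lt_trans zero_lt_one hx1) _
  have hub_q : ‖q.eval s‖ ≤ Sq * x ^ (n - 1) := norm_eval_le_aux q s hx1.le _ hqn
  have hub_e : ‖p.eraseLead.eval s‖ ≤ Se * x ^ (n - 1) := norm_eval_le_aux _ s hx1.le _ hen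
  have hsplit : p.eval s = p.eraseLead.eval s + p.leadingCoeff * s ^ n := by
    have h0 := congrArg (Polynomial.eval s) p.eraseLead_add_C_mul_X_pow
    simp only [Polynomial.eval_add, Polynomial.eval_mul, Polynomial.eval_C,
      Polynomial.eval_pow, Polynomial.eval_X] at h0
    exact h0.symm
  have hlb : lead * x ^ n - Se * x ^ (n - 1) ≤ ‖p.eval s‖ := by
    rw [hsplit]
    have h1 : ‖p.leadingCoeff * s ^ n‖ = lead * x ^ n := by
      rw [norm_mul, norm_pow]; rfl
    have h2 : ‖p.leadingCoeff * s ^ n‖ ≤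
        ‖p.eraseLead.eval s + p.leadingCoeff * s ^ n‖ + ‖p.eraseLead.eval s‖ := by
      simpa using norm_add_le (p.eraseLead.eval s + p.leadingCoeff * s ^ n)
        (-(p.eraseLead.eval s))
    linarith
  have hxn : x ^ n = x * x ^ (n - 1) := by
    conv_lhs => rw [show n = (n-1) + 1 by omega]
    rw [pow_succ]; ring
  have := mul_le_mul_of_nonneg_left hub_q hK
  calc K * ‖q.eval s‖ ≤ K * Sq * x ^ (n - 1) := by linarith [this]
    _ < lead * x ^ n - Se * x ^ (n - 1) := by
        rw [hxn]
        have : (K * Sq + Se) * x ^ (n-1) < (lead * x) * x ^ (n-1) := by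
          apply mul_lt_mul_of_pos_right _ hxpow
          linarith [hMx]
        nlinarith [this]
    _ ≤ ‖p.eval s‖ := hlb

theorem stmt13 (a b : Polynomial ℝ) (ha : a ≠ 0) (hdeg : b.degree < a.degree)
    (h : ℝ) (hh : 0 < h) (σ₀ : ℝ) :
    {s : ℂ | σ₀ < s.re ∧ qpoly a b s h = 0}.Finite := by
  rcases le_or_gt a.degree 0 with hd0 | hd0
  · -- constant case: b = 0 and a is a nonzero constant, so no zeros at all
    have hb0 : b = 0 := by
      by_contra hb
      exact absurd (lt_of_le_of_lt (Polynomial.zero_le_degree_iff.mpr hb)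
        (lt_of_lt_of_le hdeg hd0)) (lt_irrefl _)
    have hC : a = Polynomial.C (a.coeff 0) := Polynomial.eq_C_of_degree_le_zero hd0
    have hc0 : a.coeff 0 ≠ 0 := fun hc => ha (by rw [hC, hc, map_zero])
    have hempty : {s : ℂ | σ₀ < s.re ∧ qpoly a b s h = 0} = ∅ := by
      ext s
      simp only [Set.mem_setOf_eq, Set.mem_empty_iff_false, iff_false, not_and]
      intro _ hz
      rw [qpoly, hb0, map_zero, zero_mul, add_zero] at hz
      conv_lhs at hz => rw [hC]
      rw [Polynomial.aeval_C] at hz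
      exact hc0 ((algebraMap ℝ ℂ).injective (by simpa using hz))
    rw [hempty]; exact Set.finite_empty
  · -- main case
    set p : ℂ[X] := a.map (algebraMap ℝ ℂ) with hpdef
    set q : ℂ[X] := b.map (algebraMap ℝ ℂ) with hqdef
    have hinj : Function.Injective (algebraMap ℝ ℂ) := (algebraMap ℝ ℂ).injective
    have hdp : p.degree = a.degree := Polynomial.degree_map_eq_of_injective hinj a
    have hdq : q.degree = b.degree := Polynomial.degree_map_eq_of_injective hinj b
    have hp : 0 < p.degree := hdp ▸ hd0
    have hpq : q.degree < p.degree := by rw [hdp, hdq]; exact hdeg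
    set K : ℝ := Real.exp (-(h * σ₀)) with hKdef
    obtain ⟨R, hR⟩ := key_bound p q hp hpq K (Real.exp_pos _).le
    have haev : ∀ s : ℂ, (aeval s a : ℂ) = p.eval s := fun s => by
      rw [hpdef, Polynomial.eval_map, Polynomial.aeval_def]
    have hbev : ∀ s : ℂ, (aeval s b : ℂ) = q.eval s := fun s => by
      rw [hqdef, Polynomial.eval_map, Polynomial.aeval_def]
    -- all zeros in the half plane lie in the closed ball of radius R
    have hsub : {s : ℂ | σ₀ < s.re ∧ qpoly a b s h = 0} ⊆ Metric.closedBall 0 R := by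
      intro s hs
      obtain ⟨hre, hz⟩ := hs
      rw [Metric.mem_closedBall, dist_zero_right]
      by_contra hcon
      push_neg at hcon
      have hbig := hR s hcon
      rw [qpoly, haev, hbev] at hz
      have heq : p.eval s = -(q.eval s * Complex.exp (-(h : ℂ) * s)) := by
        linear_combination hz
      have hnorm : ‖p.eval s‖ = ‖q.eval s‖ * Real.exp (-(h * s.re)) := by
        rw [heq, norm_neg, norm_mul]
        congr 1
        rw [Complex.norm_exp]
        congr 1
        simp [Complex.mul_re]
      have hexple : Real.exp (-(h * s.re)) ≤ K := by
        apply Real.exp_le_exp.mpr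
        have := mul_lt_mul_of_pos_left hre hh
        linarith
      have : ‖p.eval s‖ ≤ K * ‖q.eval s‖ := by
        rw [hnorm, mul_comm]
        exact mul_le_mul_of_nonneg_right hexple (norm_nonneg _)
      linarith
    -- f is entire
    set f : ℂ → ℂ := fun s => qpoly a b s h with hfdef
    have hdiff : Differentiable ℂ f := by
      have : f = fun s => p.eval s + q.eval s * Complex.exp (-(h : ℂ) * s) := by
        funext s; rw [hfdef]; simp only [qpoly, haev, hbev]
      rw [this]
      exact (p.differentiable).add ((q.differentiable).mul
        (Complex.differentiable_exp.comp ((differentiable_const _).mul differentiable_id)))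
    have han : AnalyticOnNhd ℂ f Set.univ :=
      hdiff.differentiableOn.analyticOnNhd isOpen_univ
    -- a point where f is nonzero
    set x₁ : ℝ := max (σ₀ + 1) (max R 0) + 1 with hx₁
    have hx₁re : σ₀ < (x₁ : ℂ).re := by
      rw [Complex.ofReal_re]
      have : σ₀ + 1 ≤ max (σ₀ + 1) (max R 0) := le_max_left _ _
      linarith
    have hx₁R : R < ‖(x₁ : ℂ)‖ := by
      rw [Complex.norm_real, Real.norm_eq_abs]
      have h1 : R ≤ max (σ₀ + 1) (max R 0) := le_trans (le_max_left _ _) (le_max_right _ _)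
      have h2 : 0 ≤ max (σ₀ + 1) (max R 0) := le_trans (le_max_right _ _) (le_max_right _ _)
      rw [_root_.abs_of_nonneg (by linarith : (0:ℝ) ≤ x₁)]
      linarith
    have hfx₁ : f x₁ ≠ 0 := by
      intro hfz
      have : (x₁ : ℂ) ∈ Metric.closedBall (0:ℂ) R := hsub ⟨hx₁re, hfz⟩
      rw [Metric.mem_closedBall, dist_zero_right] at this
      linarith
    -- finiteness by contradiction
    by_contra hinf
    have hinf' : {s : ℂ | σ₀ < s.re ∧ qpoly a b s h = 0}.Infinite := hinf
    obtain ⟨z, hzK, hz⟩ := hinf'.exists_accPt_of_subset_isCompact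
      (isCompact_closedBall (0:ℂ) R) hsub
    have hfreq : ∃ᶠ y in nhdsWithin z {z}ᶜ, f y = 0 := by
      have := accPt_iff_frequently.mp hz
      rw [frequently_nhdsWithin_iff]
      apply this.mono
      rintro y ⟨hy1, hy2⟩
      exact ⟨hy2.2, hy1⟩
    have hzero := han.eqOn_zero_of_preconnected_of_frequently_eq_zero
      isPreconnected_univ (Set.mem_univ z) hfreq
    exact hfx₁ (hzero (Set.mem_univ (x₁ : ℂ)))
end
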